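/- arXiv:2605.15046 — 8 statements merged into one kernel-verified Lean document; each statement's English description precedes it below -/
import Mathlib

section
/- If p is an odd prime and θ is a prime such that there are no two nonzero consecutive p-th power residues modulo θ, and x, y, z are integers with z^p = x^p + y^p and θ does not divide any of x, y, z, then a contradiction follows; hence θ must divide one of x, y, z. -/
theorem stmt_0 (p θ : ℕ) (hp : p.Prime) (hodd : Odd p) (hθ : θ.Prime)
    (hNC : ¬ ∃ r : ZMod θ, r ≠ 0 ∧ r + 1 ≠ 0 ∧ (∃ a : ZMod θ, a ^ p = r) ∧
      (∃ b : ZMod θ, b ^ p = r + 1))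
    (x y z : ℤ) (hfermat : z ^ p = x ^ p + y ^ p)
    (hx : ¬ (θ : ℤ) ∣ x) (hy : ¬ (θ : ℤ) ∣ y) (hz : ¬ (θ : ℤ) ∣ z) : False := by
  haveI : Fact θ.Prime := ⟨hθ⟩
  have hX0 : (x : ZMod θ) ≠ 0 := by
    rw [Ne, ZMod.intCast_zmod_eq_zero_iff_dvd]; exact_mod_cast hx
  have hY0 : (y : ZMod θ) ≠ 0 := by
    rw [Ne, ZMod.intCast_zmod_eq_zero_iff_dvd]; exact_mod_cast hy
  have hZ0 : (z : ZMod θ) ≠ 0 := by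
    rw [Ne, ZMod.intCast_zmod_eq_zero_iff_dvd]; exact_mod_cast hz
  have hEq : ((z : ZMod θ)) ^ p = (x : ZMod θ) ^ p + (y : ZMod θ) ^ p := by
    have := congrArg (fun t : ℤ => (t : ZMod θ)) hfermat
    push_cast at this
    exact this
  apply hNC
  refine ⟨((x : ZMod θ) * ((y : ZMod θ))⁻¹) ^ p, ?_, ?_, ⟨_, rfl⟩, ?_⟩
  · exact pow_ne_zero _ (mul_ne_zero hX0 (inv_ne_zero hY0))
  · have : ((x : ZMod θ) * ((y : ZMod θ))⁻¹) ^ p + 1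
        = ((z : ZMod θ) * ((y : ZMod θ))⁻¹) ^ p := by
      rw [mul_pow, mul_pow, hEq, add_mul, inv_pow, mul_inv_cancel₀ (pow_ne_zero _ hY0)]
    rw [this]
    exact pow_ne_zero _ (mul_ne_zero hZ0 (inv_ne_zero hY0))
  · refine ⟨(z : ZMod θ) * ((y : ZMod θ))⁻¹, ?_⟩
    rw [mul_pow, mul_pow, hEq, add_mul, inv_pow, mul_inv_cancel₀ (pow_ne_zero _ hY0)]
end

section
/- For every odd prime p, there are only finitely many primes θ such that there are no two nonzero consecutive p-th power residues modulo θ. -/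
def NC (p θ : ℕ) : Prop :=
  ¬ ∃ r : ZMod θ, r ≠ 0 ∧ r + 1 ≠ 0 ∧ (∃ a : ZMod θ, a ^ p = r) ∧
    (∃ b : ZMod θ, b ^ p = r + 1)

open Finset

set_option linter.unusedSectionVars false
section Aux
variable {F : Type*} [Field F] [Fintype F] [DecidableEq F]

lemma aux_card_pow_eq_one (p : ℕ) (hp : p.Prime) (hdvd : p ∣ Fintype.card Fˣ) :
    (univ.filter fun x : Fˣ => x ^ p = 1).card = p := by
  haveI : Fact p.Prime := ⟨hp⟩
  obtain ⟨ζ, hζ⟩ := exists_prime_orderOf_dvd_card p hdvd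
  refine le_antisymm (IsCyclic.card_pow_eq_one_le hp.pos) ?_
  have hsub : (range p).image (fun i => ζ ^ i) ⊆ univ.filter fun x : Fˣ => x ^ p = 1 := by
    intro x hx
    simp only [mem_image, mem_range] at hx
    obtain ⟨i, _, rfl⟩ := hx
    simp only [mem_filter, mem_univ, true_and, ← hζ]
    rw [← pow_mul, mul_comm, pow_mul, pow_orderOf_eq_one, one_pow]
  have hcard : ((range p).image (fun i => ζ ^ i)).card = p := by
    rw [Finset.card_image_of_injOn, card_range]
    intro i hi j hj hij
    exact pow_injOn_Iio_orderOf (by simpa [hζ] using hi) (by simpa [hζ] using hj) hij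
  calc p = ((range p).image (fun i => ζ ^ i)).card := hcard.symm
    _ ≤ _ := Finset.card_le_card hsub

lemma aux_count_pow (p : ℕ) (hp : p.Prime) (hdvd : p ∣ Fintype.card Fˣ) (c : Fˣ) :
    (univ.filter fun u : Fˣ => u ^ p = c).card
      = if ∃ u₀ : Fˣ, u₀ ^ p = c then p else 0 := by
  split_ifs with h
  · obtain ⟨u₀, hu₀⟩ := h
    have hbij : (univ.filter fun u : Fˣ => u ^ p = c).card
        = (univ.filter fun x : Fˣ => x ^ p = 1).card := by
      apply Finset.card_bij' (fun u _ => u₀⁻¹ * u) (fun x _ => u₀ * x)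
      · intro u hu
        simp only [mem_filter, mem_univ, true_and] at hu ⊢
        rw [mul_pow, hu, ← hu₀, ← mul_pow, inv_mul_cancel, one_pow]
      · intro x hx
        simp only [mem_filter, mem_univ, true_and] at hx ⊢
        rw [mul_pow, hx, mul_one, hu₀]
      · intro u _; group
      · intro x _; group
    rw [hbij, aux_card_pow_eq_one p hp hdvd]
  · rw [Finset.card_eq_zero, Finset.filter_eq_empty_iff]
    exact fun u _ hu => h ⟨u, hu⟩

lemma aux_ord (p : ℕ) (hp : p.Prime) (χ₀ : MulChar F ℂ) (hord : orderOf χ₀ = p)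
    (g : Fˣ) (hg : ∀ x : Fˣ, ∃ k : ℕ, g ^ k = x) : orderOf (χ₀ ↑g) = p := by
  have hpow : (χ₀ ↑g) ^ p = 1 := by
    rw [← MulChar.pow_apply_coe, ← hord, pow_orderOf_eq_one, MulChar.one_apply_coe]
  have hdvd : orderOf (χ₀ ↑g) ∣ p := orderOf_dvd_of_pow_eq_one hpow
  rcases (Nat.Prime.eq_one_or_self_of_dvd hp _ hdvd) with h1 | h
  · exfalso
    have hg1 : χ₀ ↑g = 1 := orderOf_eq_one_iff.mp h1
    have : χ₀ = 1 := by
      apply MulChar.ext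
      intro a
      obtain ⟨k, rfl⟩ := hg a
      rw [MulChar.one_apply_coe, Units.val_pow_eq_pow_val, map_pow, hg1, one_pow]
    rw [this, orderOf_one] at hord
    exact (hp.one_lt.ne hord).elim
  · exact h

lemma aux_exists_pow_iff (p : ℕ) (hp : p.Prime) (χ₀ : MulChar F ℂ) (hord : orderOf χ₀ = p)
    (c : Fˣ) : (∃ u₀ : Fˣ, u₀ ^ p = c) ↔ χ₀ ↑c = 1 := by
  constructor
  · rintro ⟨u₀, rfl⟩
    rw [Units.val_pow_eq_pow_val, map_pow, ← MulChar.pow_apply_coe, ← hord,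
      pow_orderOf_eq_one, MulChar.one_apply_coe]
  · intro hc
    obtain ⟨g, hgen⟩ := IsCyclic.exists_generator (α := Fˣ)
    have hg : ∀ x : Fˣ, ∃ k : ℕ, g ^ k = x := by
      intro x
      have := (mem_powers_iff_mem_zpowers (x := g)).mpr (hgen x)
      exact (Submonoid.mem_powers_iff x g).mp this
    obtain ⟨k, rfl⟩ := hg c
    have hζ : orderOf (χ₀ ↑g) = p := aux_ord p hp χ₀ hord g hg
    have : (χ₀ ↑g) ^ k = 1 := by
      rw [← map_pow, ← Units.val_pow_eq_pow_val]; exact hc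
    have hpk : p ∣ k := hζ ▸ orderOf_dvd_of_pow_eq_one this
    exact ⟨g ^ (k / p), by rw [← pow_mul, Nat.div_mul_cancel hpk]⟩

lemma aux_char_sum_count (p : ℕ) (hp : p.Prime) (hdvd : p ∣ Fintype.card Fˣ)
    (χ₀ : MulChar F ℂ) (hord : orderOf χ₀ = p) (c : F) :
    ((univ.filter fun b : F => b ≠ 0 ∧ b ^ p = c).card : ℂ)
      = ∑ i ∈ range p, (χ₀ ^ i) c := by
  rcases eq_or_ne c 0 with rfl | hc
  · have h0 : (univ.filter fun b : F => b ≠ 0 ∧ b ^ p = 0) = ∅ := by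
      rw [Finset.filter_eq_empty_iff]
      rintro b - ⟨hb, hbp⟩
      exact hb (pow_eq_zero_iff hp.ne_zero |>.mp hbp)
    rw [h0]
    symm
    simp only [Finset.card_empty, Nat.cast_zero]
    apply Finset.sum_eq_zero
    intro i _
    exact MulChar.map_zero _
  · set cu : Fˣ := Units.mk0 c hc with hcu
    have hcast : (univ.filter fun b : F => b ≠ 0 ∧ b ^ p = c).card
        = (univ.filter fun u : Fˣ => u ^ p = cu).card := by
      apply Finset.card_bij' (fun b hb => Units.mk0 b
          (by simp only [mem_filter] at hb; exact hb.2.1)) (fun u _ => (u : F))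
      · intro b hb
        simp only [mem_filter, mem_univ, true_and] at hb ⊢
        rw [hcu]
        ext
        simp [hb.2]
      · intro b _; rfl
      · intro u _; ext; rfl
      · intro u hu
        simp only [mem_filter, mem_univ, true_and] at hu ⊢
        refine ⟨u.ne_zero, ?_⟩
        rw [← Units.val_pow_eq_pow_val, hu, hcu, Units.val_mk0]
    rw [hcast, aux_count_pow p hp hdvd cu]
    have hval : ∀ i ∈ range p, (χ₀ ^ i) c = (χ₀ c) ^ i := by
      intro i _
      rcases Nat.eq_zero_or_pos i with rfl | hi
      · rw [pow_zero, pow_zero, MulChar.one_apply hc.isUnit]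
      · rw [MulChar.pow_apply' _ hi.ne']
    rw [Finset.sum_congr rfl hval]
    by_cases hex : ∃ u₀ : Fˣ, u₀ ^ p = cu
    · have h1 : χ₀ c = 1 := by
        have := (aux_exists_pow_iff p hp χ₀ hord cu).mp hex
        rwa [hcu, Units.val_mk0] at this
      rw [if_pos hex, h1]
      simp
    · have h1 : χ₀ c ≠ 1 := by
        intro h
        exact hex ((aux_exists_pow_iff p hp χ₀ hord cu).mpr
          (by rwa [hcu, Units.val_mk0]))
      have hzp : (χ₀ c) ^ p = 1 := by
        rw [← MulChar.pow_apply' _ hp.ne_zero, ← hord, pow_orderOf_eq_one,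
          MulChar.one_apply hc.isUnit]
      rw [if_neg hex, geom_sum_eq h1, hzp, sub_self, zero_div, Nat.cast_zero]

lemma aux_shift (χ ψ : MulChar F ℂ) :
    ∑ r : F, χ r * ψ (r + 1) = χ (-1) * jacobiSum χ ψ := by
  rw [jacobiSum, Finset.mul_sum]
  apply Fintype.sum_equiv (Equiv.neg F)
  intro r
  rw [Equiv.neg_apply, ← mul_assoc, ← map_mul, neg_mul_neg, one_mul, sub_neg_eq_add, add_comm]

lemma aux_conj {p : ℕ} (hp : p ≠ 0) (χ : MulChar F ℂ) (hχ : χ ^ p = 1) (x : F) :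
    (starRingEnd ℂ) (χ x) = χ⁻¹ x := by
  by_cases hx : IsUnit x
  · have h1 : χ x ^ p = 1 := by
      rw [← MulChar.pow_apply' _ hp, hχ, MulChar.one_apply hx]
    have habs : ‖χ x‖ = 1 := Complex.norm_eq_one_of_pow_eq_one h1 hp
    rw [MulChar.inv_apply_eq_inv' χ x, ← Complex.inv_eq_conj habs]
  · rw [MulChar.map_nonunit _ hx, MulChar.map_nonunit _ hx, map_zero]

lemma aux_jacobi_abs {p : ℕ} (hp : p ≠ 0) (χ ψ : MulChar F ℂ)
    (hχp : χ ^ p = 1) (hψp : ψ ^ p = 1) (hχ : χ ≠ 1) (hψ : ψ ≠ 1) (hχψ : χ * ψ ≠ 1) :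
    ‖jacobiSum χ ψ‖ = Real.sqrt (Fintype.card F) := by
  have hchar : ringChar ℂ ≠ ringChar F := by
    rw [ringChar.eq_zero]
    exact fun h => CharP.char_ne_zero_of_finite F (ringChar F) h.symm
  have h := jacobiSum_mul_jacobiSum_inv hchar hχ hψ hχψ
  have hconj : jacobiSum χ⁻¹ ψ⁻¹ = (starRingEnd ℂ) (jacobiSum χ ψ) := by
    rw [jacobiSum, jacobiSum, map_sum]
    refine Finset.sum_congr rfl fun x _ => ?_
    rw [map_mul, aux_conj hp χ hχp, aux_conj hp ψ hψp]
  rw [hconj, Complex.mul_conj] at h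
  have hq : Complex.normSq (jacobiSum χ ψ) = (Fintype.card F : ℝ) := by
    have := h
    rw [show ((Fintype.card F : ℂ)) = (((Fintype.card F : ℝ)) : ℂ) by push_cast; ring] at this
    exact_mod_cast this
  rw [Complex.norm_def, hq]

lemma aux_exists_consec (p : ℕ) (hp : p.Prime) (h2 : (2 : F) ≠ 0)
    (hbig : (((p : ℝ) ^ 2 + 1) ^ 2 < (Fintype.card F : ℝ))) :
    ∃ a b : F, a ≠ 0 ∧ b ≠ 0 ∧ b ^ p = a ^ p + 1 := by
  by_cases hdvd : p ∣ Fintype.card Fˣ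
  · -- main case: use character sums
    have hdvd' : p ∣ Fintype.card F - 1 := by rwa [Fintype.card_units] at hdvd
    obtain ⟨χ₀, hord⟩ := MulChar.exists_mulChar_orderOf F hdvd'
      (Complex.isPrimitiveRoot_exp p hp.ne_zero)
    set n : F → ℕ := fun c => (univ.filter fun b : F => b ≠ 0 ∧ b ^ p = c).card with hn
    by_cases hS : ∑ r : F, n r * n (r + 1) = 0
    · exfalso
      -- character sum computation
      set Tm : ℕ × ℕ → ℂ :=
        fun z => (χ₀ ^ z.1) (-1) * jacobiSum (χ₀ ^ z.1) (χ₀ ^ z.2) with hTm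
      have hsum : ((∑ r : F, n r * n (r + 1) : ℕ) : ℂ)
          = ∑ z ∈ (range p) ×ˢ (range p), Tm z := by
        push_cast
        calc ∑ r : F, (n r : ℂ) * (n (r + 1) : ℂ)
            = ∑ r : F, (∑ i ∈ range p, (χ₀ ^ i) r) * (∑ j ∈ range p, (χ₀ ^ j) (r + 1)) := by
              refine Finset.sum_congr rfl fun r _ => ?_
              rw [hn, aux_char_sum_count p hp hdvd χ₀ hord r,
                aux_char_sum_count p hp hdvd χ₀ hord (r + 1)]
          _ = ∑ r : F, ∑ z ∈ (range p) ×ˢ (range p), (χ₀ ^ z.1) r * (χ₀ ^ z.2) (r + 1) := by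
              refine Finset.sum_congr rfl fun r _ => ?_
              rw [Finset.sum_mul_sum, Finset.sum_product]
          _ = ∑ z ∈ (range p) ×ˢ (range p), ∑ r : F, (χ₀ ^ z.1) r * (χ₀ ^ z.2) (r + 1) :=
              Finset.sum_comm
          _ = ∑ z ∈ (range p) ×ˢ (range p), Tm z := by
              refine Finset.sum_congr rfl fun z _ => ?_
              rw [hTm, aux_shift]
      rw [hS, Nat.cast_zero] at hsum
      have hmem : ((0 : ℕ), (0 : ℕ)) ∈ (range p) ×ˢ (range p) := by
        simp [Finset.mem_product, hp.pos]
      rw [← Finset.add_sum_erase _ Tm hmem] at hsum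
      have h00 : Tm (0, 0) = (Fintype.card F : ℂ) - 2 := by
        rw [hTm]
        simp only [pow_zero]
        rw [MulChar.one_apply (isUnit_one.neg), one_mul, jacobiSum_one_one]
      -- bound the rest
      have hq2 : (2 : ℝ) ≤ (Fintype.card F : ℝ) := by
        exact_mod_cast Fintype.one_lt_card (α := F)
      have hsqrt1 : (1 : ℝ) ≤ Real.sqrt (Fintype.card F) := by
        rw [show (1:ℝ) = Real.sqrt 1 by simp]
        exact Real.sqrt_le_sqrt (by linarith)
      have hpowne : ∀ i, 0 < i → i < p → χ₀ ^ i ≠ 1 := by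
        intro i hi0 hip h1
        have := orderOf_dvd_of_pow_eq_one h1
        rw [hord] at this
        exact absurd (Nat.le_of_dvd hi0 this) (not_le.mpr hip)
      have hppow : ∀ i : ℕ, (χ₀ ^ i) ^ p = 1 := fun i => by
        rw [← pow_mul, mul_comm, pow_mul, ← hord, pow_orderOf_eq_one, one_pow]
      have habs1 : ∀ i : ℕ, ‖(χ₀ ^ i) (-1)‖ = 1 := by
        intro i
        have hm : (χ₀ ^ i) (-1) * (χ₀ ^ i) (-1) = 1 := by
          rw [← map_mul, neg_mul_neg, one_mul, MulChar.map_one]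
        rcases mul_self_eq_one_iff.mp hm with h | h <;> simp [h]
      have hbound : ∀ z ∈ ((range p) ×ˢ (range p)).erase (0, 0),
          ‖Tm z‖ ≤ Real.sqrt (Fintype.card F) := by
        rintro ⟨i, j⟩ hz
        rw [Finset.mem_erase, Finset.mem_product, Finset.mem_range, Finset.mem_range] at hz
        obtain ⟨hne, hi, hj⟩ := hz
        rw [hTm]
        simp only [norm_mul, habs1, one_mul]
        rcases Nat.eq_zero_or_pos i with rfl | hi0
        · have hj0 : 0 < j := Nat.pos_of_ne_zero fun h => hne (by rw [h])
          rw [pow_zero, jacobiSum_one_nontrivial (hpowne j hj0 hj)]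
          simpa using hsqrt1
        rcases Nat.eq_zero_or_pos j with rfl | hj0
        · rw [pow_zero, jacobiSum_comm, jacobiSum_one_nontrivial (hpowne i hi0 hi)]
          simpa using hsqrt1
        by_cases hij : p ∣ (i + j)
        · have hinv : χ₀ ^ j = (χ₀ ^ i)⁻¹ := by
            apply eq_inv_of_mul_eq_one_left
            rw [← pow_add]
            exact orderOf_dvd_iff_pow_eq_one.mp (by rw [hord, add_comm]; exact hij)
          rw [hinv, jacobiSum_nontrivial_inv (hpowne i hi0 hi), norm_neg, habs1 i]
          exact hsqrt1
        · have hij1 : (χ₀ ^ i) * (χ₀ ^ j) ≠ 1 := by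
            rw [← pow_add]
            intro h1
            exact hij (hord ▸ orderOf_dvd_of_pow_eq_one h1)
          rw [aux_jacobi_abs hp.ne_zero _ _ (hppow i) (hppow j)
            (hpowne i hi0 hi) (hpowne j hj0 hj) hij1]
      -- assemble the inequality
      have key : ‖(Fintype.card F : ℂ) - 2‖
          ≤ ((p * p - 1 : ℕ) : ℝ) * Real.sqrt (Fintype.card F) := by
        have h1 : (Fintype.card F : ℂ) - 2
            = - ∑ z ∈ ((range p) ×ˢ (range p)).erase (0, 0), Tm z := by
          rw [← h00]; linear_combination -hsum
        rw [h1, norm_neg]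
        calc ‖∑ z ∈ ((range p) ×ˢ (range p)).erase (0, 0), Tm z‖
            ≤ ∑ z ∈ ((range p) ×ˢ (range p)).erase (0, 0), ‖Tm z‖ :=
              norm_sum_le _ _
          _ ≤ (((range p) ×ˢ (range p)).erase (0, 0)).card • Real.sqrt (Fintype.card F) :=
              Finset.sum_le_card_nsmul _ _ _ hbound
          _ = ((p * p - 1 : ℕ) : ℝ) * Real.sqrt (Fintype.card F) := by
              rw [Finset.card_erase_of_mem hmem, Finset.card_product, Finset.card_range,
                nsmul_eq_mul]
      have habsq : ‖(Fintype.card F : ℂ) - 2‖ = (Fintype.card F : ℝ) - 2 := by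
        rw [show ((Fintype.card F : ℂ) - 2) = (((Fintype.card F : ℝ) - 2 : ℝ) : ℂ) by push_cast; ring,
          Complex.norm_real, Real.norm_eq_abs, abs_of_nonneg (by linarith)]
      rw [habsq] at key
      -- numeric contradiction
      set s := Real.sqrt (Fintype.card F) with hs
      have hs2 : s ^ 2 = (Fintype.card F : ℝ) := Real.sq_sqrt (by positivity)
      have hsgt : (p : ℝ) ^ 2 + 1 < s := by
        have := Real.sqrt_lt_sqrt (by positivity) hbig
        rwa [Real.sqrt_sq (by positivity)] at this
      have hcast : ((p * p - 1 : ℕ) : ℝ) ≤ (p : ℝ) ^ 2 - 1 := by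
        have hp1 : 1 ≤ p * p := Nat.one_le_iff_ne_zero.mpr (Nat.mul_ne_zero hp.ne_zero hp.ne_zero)
        rw [Nat.cast_sub hp1]
        push_cast
        nlinarith
      have hple : (2 : ℝ) ≤ (p : ℝ) := by exact_mod_cast hp.two_le
      nlinarith [key, hs2, hsgt, hcast, hsqrt1]
    · -- extract witnesses
      obtain ⟨r, _, hr⟩ := Finset.exists_ne_zero_of_sum_ne_zero hS
      have hr1 : n r ≠ 0 := fun h => hr (by rw [h, zero_mul])
      have hr2 : n (r + 1) ≠ 0 := fun h => hr (by rw [h, mul_zero])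
      obtain ⟨a, ha⟩ := Finset.card_ne_zero.mp hr1 |>.exists_mem
      obtain ⟨b, hb⟩ := Finset.card_ne_zero.mp hr2 |>.exists_mem
      rw [Finset.mem_filter] at ha hb
      exact ⟨a, b, ha.2.1, hb.2.1, by rw [hb.2.2, ha.2.2]⟩
  · -- easy case: every element is a p-th power
    have hco : (Nat.card Fˣ).Coprime p := by
      rw [Nat.card_eq_fintype_card, Nat.coprime_comm]
      exact (hp.coprime_iff_not_dvd).mpr hdvd
    obtain ⟨b, hb⟩ := (powCoprime hco).surjective (Units.mk0 2 h2)
    refine ⟨1, (b : F), one_ne_zero, b.ne_zero, ?_⟩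
    have : ((b ^ p : Fˣ) : F) = 2 := by
      rw [show b ^ p = powCoprime hco b from rfl, hb, Units.val_mk0]
    rw [Units.val_pow_eq_pow_val] at this
    rw [this, one_pow]
    ring
end Aux

theorem stmt_7 (p : ℕ) (hp : p.Prime) (hodd : Odd p) :
    {θ : ℕ | θ.Prime ∧ NC p θ}.Finite := by
  apply Set.Finite.subset (Set.finite_Iic ((p ^ 2 + 1) ^ 2))
  intro θ hθ
  obtain ⟨hθp, hNC⟩ := hθ
  by_contra hgt
  simp only [Set.mem_Iic, not_le] at hgt
  apply hNC
  haveI : Fact θ.Prime := ⟨hθp⟩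
  have hθ2 : 2 < θ := lt_of_le_of_lt (by nlinarith [hp.two_le]) hgt
  have h2 : (2 : ZMod θ) ≠ 0 := by
    have : ((2 : ℕ) : ZMod θ) ≠ 0 := by
      rw [Ne, ZMod.natCast_eq_zero_iff]
      intro hdvd
      exact absurd (Nat.le_of_dvd (by norm_num) hdvd) (not_le.mpr hθ2)
    simpa using this
  have hbig : ((p : ℝ) ^ 2 + 1) ^ 2 < (Fintype.card (ZMod θ) : ℝ) := by
    rw [ZMod.card]
    have : (((p ^ 2 + 1) ^ 2 : ℕ) : ℝ) < (θ : ℝ) := by exact_mod_cast hgt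
    push_cast at this
    linarith
  obtain ⟨a, b, ha, hb, h⟩ := aux_exists_consec p hp h2 hbig
  exact ⟨a ^ p, pow_ne_zero _ ha, h ▸ pow_ne_zero _ hb, ⟨a, rfl⟩, ⟨b, h⟩⟩
end

section
/- If p is an odd prime such that θ = 2p + 1 is also prime, then for any integers x, y, z with z^p = x^p + y^p, θ divides one of x, y, z. -/
/-!
Work modulo the prime `θ = 2p + 1`. By Fermat, every unit `a` satisfies
`(a ^ p) ^ 2 = a ^ (θ - 1) = 1`, so `a ^ p = ±1`. If `θ` divided none of `x, y, z`, reducing `z ^ p = x ^ p + y ^ p` would give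
`±1 = ±1 ± 1`, which forces `θ ∣ 1` or `θ ∣ 3`; both are impossible since `θ ≥ 5`.
-/

theorem pow_mul_self_eq_one_of_card_eq {K : Type*} [GroupWithZero K] [Fintype K] {p : ℕ}
    (hK : Fintype.card K = 2 * p + 1) {a : K} (ha : a ≠ 0) : a ^ p * a ^ p = 1 := by
  rw [← pow_add, ← two_mul, show 2 * p = Fintype.card K - 1 by omega]
  exact FiniteField.pow_card_sub_one_eq_one a ha

theorem add_ne_of_mul_self_eq_one {R : Type*} [CommRing R] [NoZeroDivisors R] (h3 : (3 : R) ≠ 0)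
    {a b c : R} (ha : a * a = 1) (hb : b * b = 1) (hc : c * c = 1) : a + b ≠ c := by
  have h1 : (1 : R) ≠ 0 := fun h ↦ h3 (by linear_combination 3 * h)
  intro habc
  rcases mul_self_eq_one_iff.1 ha with rfl | rfl <;>
    rcases mul_self_eq_one_iff.1 hb with rfl | rfl <;>
    rcases mul_self_eq_one_iff.1 hc with rfl | rfl <;>
    first
      | exact h1 (by linear_combination habc)
      | exact h1 (by linear_combination -habc)
      | exact h3 (by linear_combination habc)
      | exact h3 (by linear_combination -habc)

theorem stmt_10_general (p : ℕ) (hp : p.Prime) (hθ : (2 * p + 1).Prime)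
    (x y z : ℤ) (h : z ^ p = x ^ p + y ^ p) :
    ((2 * p + 1 : ℕ) : ℤ) ∣ x ∨ ((2 * p + 1 : ℕ) : ℤ) ∣ y ∨ ((2 * p + 1 : ℕ) : ℤ) ∣ z := by
  have := Fact.mk hθ
  by_contra! ⟨hx, hy, hz⟩
  have h3 : (3 : ZMod (2 * p + 1)) ≠ 0 := by
    exact_mod_cast CharP.cast_ne_zero_of_ne_of_prime _ Nat.prime_three (by linarith [hp.two_le])
  have hunit (a : ℤ) (ha : ¬((2 * p + 1 : ℕ) : ℤ) ∣ a) :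
      (a : ZMod (2 * p + 1)) ^ p * (a : ZMod (2 * p + 1)) ^ p = 1 :=
    pow_mul_self_eq_one_of_card_eq (ZMod.card _) (mt (ZMod.intCast_zmod_eq_zero_iff_dvd a _).1 ha)
  refine add_ne_of_mul_self_eq_one h3 (hunit x hx) (hunit y hy) (hunit z hz) ?_
  exact_mod_cast congrArg (Int.cast : ℤ → ZMod (2 * p + 1)) h.symm

theorem stmt_10 (p : ℕ) (hp : p.Prime) (hodd : Odd p) (hθ : (2 * p + 1).Prime)
    (x y z : ℤ) (h : z ^ p = x ^ p + y ^ p) :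
    ((2 * p + 1 : ℕ) : ℤ) ∣ x ∨ ((2 * p + 1 : ℕ) : ℤ) ∣ y ∨ ((2 * p + 1 : ℕ) : ℤ) ∣ z :=
  stmt_10_general p hp hθ x y z h
end

section
/- Let p be an odd prime with 2p + 1 prime, and suppose additionally that p is not a p-th power residue modulo 2p + 1. Then in any integer solution of z^p = x^p + y^p, one of x, y, z is divisible by p. -/
open Finset

private lemma sg_sum_pow {R : Type*} [CommRing R] (p : ℕ) (u : R) :
    (∑ i ∈ range p, u ^ i * u ^ (p - 1 - i)) = (p : R) * u ^ (p - 1) := by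
  have h : ∀ i ∈ range p, u ^ i * u ^ (p - 1 - i) = u ^ (p - 1) := by
    intro i hi
    rw [← pow_add]
    congr 1
    have := mem_range.mp hi
    omega
  rw [Finset.sum_congr rfl h, Finset.sum_const, card_range, nsmul_eq_mul]

private lemma sg_coprime_of (m n : ℤ)
    (h : ∀ q : ℕ, q.Prime → (q : ℤ) ∣ m → (q : ℤ) ∣ n → False) : IsCoprime m n := by
  rw [Int.isCoprime_iff_gcd_eq_one]
  by_contra hg
  obtain ⟨q, hq, hqd⟩ := Nat.exists_prime_and_dvd hg
  have hqd' : (q : ℤ) ∣ (Int.gcd m n : ℤ) := Int.natCast_dvd_natCast.mpr hqd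
  exact h q hq (hqd'.trans (Int.gcd_dvd_left m n)) (hqd'.trans (Int.gcd_dvd_right m n))

private lemma sg_factor (p : ℕ) (hp : p.Prime) (hodd : Odd p) (a b c : ℤ)
    (heq : a ^ p + b ^ p + c ^ p = 0) (hab : IsCoprime a b) (hpc : ¬ (p : ℤ) ∣ c) :
    ∃ α τ : ℤ, a + b = α ^ p ∧ (∑ i ∈ range p, a ^ i * (-b) ^ (p - 1 - i)) = τ ^ p := by
  set S : ℤ := ∑ i ∈ range p, a ^ i * (-b) ^ (p - 1 - i) with hS
  have hmul : S * (a + b) = (-c) ^ p := by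
    have h1 := geom_sum₂_mul a (-b) p
    rw [sub_neg_eq_add, hodd.neg_pow] at h1
    rw [hodd.neg_pow, ← hS] at *
    rw [h1]; linarith
  have hco : IsCoprime (a + b) S := by
    apply sg_coprime_of
    intro q hq hq1 hq2
    haveI := Fact.mk hq
    have hqZ : Prime (q : ℤ) := Nat.prime_iff_prime_int.mp hq
    have hqc : (q : ℤ) ∣ c := by
      have h2 : (q : ℤ) ∣ (-c) ^ p := hmul ▸ hq2.mul_right (a + b)
      exact (dvd_neg).mp (hqZ.dvd_of_dvd_pow h2)
    have habz : -(b : ZMod q) = (a : ZMod q) := by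
      have h3 : ((a + b : ℤ) : ZMod q) = 0 := (ZMod.intCast_zmod_eq_zero_iff_dvd _ q).mpr hq1
      push_cast at h3
      linear_combination -h3
    have hSz : ((S : ℤ) : ZMod q) = 0 := (ZMod.intCast_zmod_eq_zero_iff_dvd _ q).mpr hq2
    have hSz2 : (p : ZMod q) * (a : ZMod q) ^ (p - 1) = 0 := by
      rw [← sg_sum_pow, ← hSz, hS]
      push_cast
      refine Finset.sum_congr rfl fun i _ => ?_
      rw [habz]
    rcases mul_eq_zero.mp hSz2 with h4 | h4
    · have h5 : q ∣ p := (ZMod.natCast_eq_zero_iff p q).mp h4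
      have h6 : q = p := (Nat.prime_dvd_prime_iff_eq hq hp).mp h5
      exact hpc (h6 ▸ hqc)
    · have h5 : (a : ZMod q) = 0 := pow_eq_zero_iff (by
        have := hp.two_le; omega : p - 1 ≠ 0) |>.mp h4
      have hqa : (q : ℤ) ∣ a := (ZMod.intCast_zmod_eq_zero_iff_dvd _ q).mp h5
      have hqb : (q : ℤ) ∣ b := (dvd_add_right hqa).mp hq1
      exact hqZ.not_unit (hab.isUnit_of_dvd' hqa hqb)
  have hmul' : (a + b) * S = (-c) ^ p := by rw [mul_comm]; exact hmul
  obtain ⟨d, hd⟩ := exists_associated_pow_of_mul_eq_pow' hco hmul'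
  obtain ⟨e, he⟩ := exists_associated_pow_of_mul_eq_pow' hco.symm hmul
  have h1 : ∃ u : ℤ, a + b = u ^ p := by
    rcases Int.associated_iff.mp hd with h | h
    · exact ⟨d, h.symm⟩
    · exact ⟨-d, by rw [hodd.neg_pow]; linarith⟩
  have h2 : ∃ u : ℤ, S = u ^ p := by
    rcases Int.associated_iff.mp he with h | h
    · exact ⟨e, h.symm⟩
    · exact ⟨-e, by rw [hodd.neg_pow]; linarith⟩
  obtain ⟨u1, hu1⟩ := h1
  obtain ⟨u2, hu2⟩ := h2
  exact ⟨u1, u2, hu1, hu2⟩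

private lemma sg_cube (p : ℕ) (hp : 0 < p) (hθ : (2 * p + 1).Prime) (v : ZMod (2 * p + 1)) :
    v ^ p = 0 ∨ v ^ p = 1 ∨ v ^ p = -1 := by
  haveI := Fact.mk hθ
  rcases eq_or_ne v 0 with h | h
  · exact Or.inl (by rw [h, zero_pow hp.ne'])
  · have h1 : v ^ (p * 2) = 1 := by
      have h2 := ZMod.pow_card_sub_one_eq_one h
      rwa [show 2 * p + 1 - 1 = p * 2 by omega] at h2
    have h2 : (v ^ p - 1) * (v ^ p + 1) = 0 := by
      have h3 : (v ^ p) ^ 2 = 1 := by rw [← pow_mul]; exact h1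
      linear_combination h3
    rcases mul_eq_zero.mp h2 with h3 | h3
    · exact Or.inr (Or.inl (by linear_combination h3))
    · exact Or.inr (Or.inr (by linear_combination h3))

private lemma sg_ne (p n : ℕ) (hn : n ≠ 0) (h : n < 2 * p + 1) :
    ((n : ℕ) : ZMod (2 * p + 1)) ≠ 0 := by
  rw [Ne, ZMod.natCast_eq_zero_iff]
  intro hd
  have := Nat.le_of_dvd (by omega) hd
  omega

private lemma sg_key (p : ℕ) (hp : p.Prime) (hodd : Odd p) (hθ : (2 * p + 1).Prime)
    (hnp : ¬ ∃ u : ZMod (2 * p + 1), u ^ p = (p : ZMod (2 * p + 1)))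
    (a b c : ℤ) (heq : a ^ p + b ^ p + c ^ p = 0)
    (hab : IsCoprime a b) (hac : IsCoprime a c) (hbc : IsCoprime b c)
    (hpa : ¬ (p : ℤ) ∣ a) (hpb : ¬ (p : ℤ) ∣ b) (hpc : ¬ (p : ℤ) ∣ c)
    (hθa : ((2 * p + 1 : ℕ) : ℤ) ∣ a) : False := by
  haveI := Fact.mk hθ
  have hθZ : Prime ((2 * p + 1 : ℕ) : ℤ) := Nat.prime_iff_prime_int.mp hθ
  have hp2 : p ≠ 2 := by rintro rfl; revert hodd; decide
  have hp3 : 3 ≤ p := by have := hp.two_le; omega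
  obtain ⟨γ, -, hγ, -⟩ := sg_factor p hp hodd a b c heq hab hpc
  obtain ⟨α, -, hα, -⟩ := sg_factor p hp hodd a c b (by linarith) hac hpb
  obtain ⟨β, τ, hβ, hτ⟩ := sg_factor p hp hodd b c a (by linarith) hbc hpa
  have ha0 : ((a : ℤ) : ZMod (2 * p + 1)) = 0 :=
    (ZMod.intCast_zmod_eq_zero_iff_dvd a (2 * p + 1)).mpr hθa
  have hone : (1 : ZMod (2 * p + 1)) ≠ 0 := by
    have := sg_ne p 1 one_ne_zero (by omega); push_cast at this; exact this
  have hthree : (3 : ZMod (2 * p + 1)) ≠ 0 := by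
    have := sg_ne p 3 (by omega) (by omega); push_cast at this; exact this
  have hγc : (γ : ZMod (2 * p + 1)) ^ p = (b : ZMod (2 * p + 1)) := by
    have h1 := congrArg (Int.cast : ℤ → ZMod (2 * p + 1)) hγ
    push_cast at h1
    rw [ha0, zero_add] at h1
    exact h1.symm
  have hαc : (α : ZMod (2 * p + 1)) ^ p = (c : ZMod (2 * p + 1)) := by
    have h1 := congrArg (Int.cast : ℤ → ZMod (2 * p + 1)) hα
    push_cast at h1
    rw [ha0, zero_add] at h1
    exact h1.symm
  have hβc : (β : ZMod (2 * p + 1)) ^ p = (b : ZMod (2 * p + 1)) + (c : ZMod (2 * p + 1)) := by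
    have h1 := congrArg (Int.cast : ℤ → ZMod (2 * p + 1)) hβ
    push_cast at h1
    exact h1.symm
  have hsum : (γ : ZMod (2 * p + 1)) ^ p + (α : ZMod (2 * p + 1)) ^ p
      - (β : ZMod (2 * p + 1)) ^ p = 0 := by
    rw [hγc, hαc, hβc]; ring
  have hγ0 : (γ : ZMod (2 * p + 1)) ^ p ≠ 0 := by
    intro h0
    have hb0 : (b : ZMod (2 * p + 1)) = 0 := by rw [← hγc, h0]
    have hd : ((2 * p + 1 : ℕ) : ℤ) ∣ b := (ZMod.intCast_zmod_eq_zero_iff_dvd b _).mp hb0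
    exact hθZ.not_unit (hab.isUnit_of_dvd' hθa hd)
  have hα0 : (α : ZMod (2 * p + 1)) ^ p ≠ 0 := by
    intro h0
    have hc0 : (c : ZMod (2 * p + 1)) = 0 := by rw [← hαc, h0]
    have hd : ((2 * p + 1 : ℕ) : ℤ) ∣ c := (ZMod.intCast_zmod_eq_zero_iff_dvd c _).mp hc0
    exact hθZ.not_unit (hac.isUnit_of_dvd' hθa hd)
  have hβp0 : (β : ZMod (2 * p + 1)) ^ p = 0 := by
    rcases sg_cube p hp.pos hθ γ with h1 | h1 | h1 <;>
    rcases sg_cube p hp.pos hθ α with h2 | h2 | h2 <;>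
    rcases sg_cube p hp.pos hθ β with h3 | h3 | h3 <;>
    first
      | exact absurd h1 hγ0
      | exact absurd h2 hα0
      | exact h3
      | (rw [h1, h2, h3] at hsum
         first
           | exact absurd (by linear_combination hsum : (1 : ZMod (2 * p + 1)) = 0) hone
           | exact absurd (by linear_combination -hsum : (1 : ZMod (2 * p + 1)) = 0) hone
           | exact absurd (by linear_combination hsum : (3 : ZMod (2 * p + 1)) = 0) hthree
           | exact absurd (by linear_combination -hsum : (3 : ZMod (2 * p + 1)) = 0) hthree)
  have hc : (c : ZMod (2 * p + 1)) = -(b : ZMod (2 * p + 1)) := by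
    have := hβc.symm.trans hβp0
    linear_combination this
  have hbne : (b : ZMod (2 * p + 1)) ≠ 0 := by
    intro h0
    have hcz : (c : ZMod (2 * p + 1)) = 0 := by rw [hc, h0, neg_zero]
    have hd1 : ((2 * p + 1 : ℕ) : ℤ) ∣ b := (ZMod.intCast_zmod_eq_zero_iff_dvd b _).mp h0
    have hd2 : ((2 * p + 1 : ℕ) : ℤ) ∣ c := (ZMod.intCast_zmod_eq_zero_iff_dvd c _).mp hcz
    exact hθZ.not_unit (hbc.isUnit_of_dvd' hd1 hd2)
  have hγne : (γ : ZMod (2 * p + 1)) ≠ 0 := by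
    intro h0
    exact hγ0 (by rw [h0, zero_pow hp.pos.ne'])
  have hτc : (τ : ZMod (2 * p + 1)) ^ p
      = (p : ZMod (2 * p + 1)) * (b : ZMod (2 * p + 1)) ^ (p - 1) := by
    have h1 := congrArg (Int.cast : ℤ → ZMod (2 * p + 1)) hτ
    push_cast at h1
    rw [← h1]
    have h2 : ∀ i ∈ range p, (b : ZMod (2 * p + 1)) ^ i * (-(c : ZMod (2 * p + 1))) ^ (p - 1 - i)
        = (b : ZMod (2 * p + 1)) ^ i * (b : ZMod (2 * p + 1)) ^ (p - 1 - i) := by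
      intro i _
      rw [hc, neg_neg]
    rw [Finset.sum_congr rfl h2, sg_sum_pow]
  have hbg : (b : ZMod (2 * p + 1)) ^ (p - 1) = ((γ : ZMod (2 * p + 1)) ^ (p - 1)) ^ p := by
    rw [← hγc, pow_right_comm]
  have hgp : ((γ : ZMod (2 * p + 1)) ^ (p - 1)) ^ p ≠ 0 :=
    pow_ne_zero _ (pow_ne_zero _ hγne)
  refine hnp ⟨(τ : ZMod (2 * p + 1)) * ((γ : ZMod (2 * p + 1)) ^ (p - 1))⁻¹, ?_⟩
  rw [mul_pow, inv_pow, hτc, hbg, mul_assoc, mul_inv_cancel₀ hgp, mul_one]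

theorem stmt_11 (p : ℕ) (hp : p.Prime) (hodd : Odd p) (hθ : (2 * p + 1).Prime)
    (hnp : ¬ ∃ a : ZMod (2 * p + 1), a ^ p = (p : ZMod (2 * p + 1)))
    (x y z : ℤ) (h : z ^ p = x ^ p + y ^ p) :
    (p : ℤ) ∣ x ∨ (p : ℤ) ∣ y ∨ (p : ℤ) ∣ z := by
  by_contra hcon
  push_neg at hcon
  obtain ⟨hpx, hpy, hpz⟩ := hcon
  haveI := Fact.mk hθ
  have hx0 : x ≠ 0 := by rintro rfl; exact hpx (dvd_zero _)
  have hgpos : 0 < Int.gcd x y := Int.gcd_pos_iff.mpr (Or.inl hx0)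
  set g : ℤ := (Int.gcd x y : ℤ) with hgdef
  have hg0 : g ≠ 0 := by
    simp only [hgdef, Ne, Int.natCast_eq_zero]
    omega
  have hgx : g ∣ x := Int.gcd_dvd_left x y
  have hgy : g ∣ y := Int.gcd_dvd_right x y
  have hgz : g ∣ z := by
    have h1 : g ^ p ∣ z ^ p := by
      rw [h]; exact dvd_add (pow_dvd_pow_of_dvd hgx p) (pow_dvd_pow_of_dvd hgy p)
    exact (Int.pow_dvd_pow_iff hp.pos.ne').mp h1
  obtain ⟨x1, hx1⟩ := hgx
  obtain ⟨y1, hy1⟩ := hgy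
  obtain ⟨z1, hz1⟩ := hgz
  have hxdiv : x / g = x1 := by rw [hx1, Int.mul_ediv_cancel_left _ hg0]
  have hydiv : y / g = y1 := by rw [hy1, Int.mul_ediv_cancel_left _ hg0]
  have hxy1 : IsCoprime x1 y1 := by
    rw [Int.isCoprime_iff_gcd_eq_one, ← hxdiv, ← hydiv]
    exact Int.gcd_div_gcd_div_gcd hgpos
  have heq1 : z1 ^ p = x1 ^ p + y1 ^ p := by
    have h2 : g ^ p * z1 ^ p = g ^ p * (x1 ^ p + y1 ^ p) := by
      rw [mul_add, ← mul_pow, ← mul_pow, ← mul_pow, ← hx1, ← hy1, ← hz1]; exact h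
    exact mul_left_cancel₀ (pow_ne_zero _ hg0) h2
  have hpx1 : ¬ (p : ℤ) ∣ x1 := fun hd => hpx (hx1 ▸ hd.mul_left g)
  have hpy1 : ¬ (p : ℤ) ∣ y1 := fun hd => hpy (hy1 ▸ hd.mul_left g)
  have hpz1 : ¬ (p : ℤ) ∣ z1 := fun hd => hpz (hz1 ▸ hd.mul_left g)
  have hxz1 : IsCoprime x1 z1 := by
    apply sg_coprime_of
    intro q hq hq1 hq2
    have hqZ : Prime (q : ℤ) := Nat.prime_iff_prime_int.mp hq
    have hqy : (q : ℤ) ∣ y1 := by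
      refine hqZ.dvd_of_dvd_pow (n := p) ?_
      have h3 : y1 ^ p = z1 ^ p - x1 ^ p := by linarith
      rw [h3]
      exact dvd_sub (dvd_pow hq2 hp.pos.ne') (dvd_pow hq1 hp.pos.ne')
    exact hqZ.not_unit (hxy1.isUnit_of_dvd' hq1 hqy)
  have hyz1 : IsCoprime y1 z1 := by
    apply sg_coprime_of
    intro q hq hq1 hq2
    have hqZ : Prime (q : ℤ) := Nat.prime_iff_prime_int.mp hq
    have hqx : (q : ℤ) ∣ x1 := by
      refine hqZ.dvd_of_dvd_pow (n := p) ?_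
      have h3 : x1 ^ p = z1 ^ p - y1 ^ p := by linarith
      rw [h3]
      exact dvd_sub (dvd_pow hq2 hp.pos.ne') (dvd_pow hq1 hp.pos.ne')
    exact hqZ.not_unit (hxy1.isUnit_of_dvd' hqx hq1)
  have heqa : x1 ^ p + y1 ^ p + (-z1) ^ p = 0 := by
    rw [hodd.neg_pow]; linarith
  have hone : (1 : ZMod (2 * p + 1)) ≠ 0 := by
    have := sg_ne p 1 one_ne_zero (by have := hp.pos; omega); push_cast at this; exact this
  have hthree : (3 : ZMod (2 * p + 1)) ≠ 0 := by
    have hp2 : p ≠ 2 := by rintro rfl; revert hodd; decide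
    have hp3 : 3 ≤ p := by have := hp.two_le; omega
    have := sg_ne p 3 (by omega) (by omega); push_cast at this; exact this
  have hcast : (x1 : ZMod (2 * p + 1)) ^ p + (y1 : ZMod (2 * p + 1)) ^ p
      - (z1 : ZMod (2 * p + 1)) ^ p = 0 := by
    have h1 := congrArg (Int.cast : ℤ → ZMod (2 * p + 1)) heqa
    push_cast at h1
    rw [hodd.neg_pow] at h1
    linear_combination h1
  have hdvd : ((2 * p + 1 : ℕ) : ℤ) ∣ x1 ∨ ((2 * p + 1 : ℕ) : ℤ) ∣ y1
      ∨ ((2 * p + 1 : ℕ) : ℤ) ∣ z1 := by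
    by_contra hno
    push_neg at hno
    obtain ⟨hn1, hn2, hn3⟩ := hno
    have hne : ∀ w : ℤ, ¬ ((2 * p + 1 : ℕ) : ℤ) ∣ w → (w : ZMod (2 * p + 1)) ^ p ≠ 0 := by
      intro w hw h0
      have h1 : (w : ZMod (2 * p + 1)) = 0 := pow_eq_zero_iff hp.pos.ne' |>.mp h0
      exact hw ((ZMod.intCast_zmod_eq_zero_iff_dvd w _).mp h1)
    rcases sg_cube p hp.pos hθ (x1 : ZMod (2 * p + 1)) with h1 | h1 | h1 <;>
    rcases sg_cube p hp.pos hθ (y1 : ZMod (2 * p + 1)) with h2 | h2 | h2 <;>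
    rcases sg_cube p hp.pos hθ (z1 : ZMod (2 * p + 1)) with h3 | h3 | h3 <;>
    first
      | exact hne x1 hn1 h1
      | exact hne y1 hn2 h2
      | exact hne z1 hn3 h3
      | (rw [h1, h2, h3] at hcast
         first
           | exact absurd (by linear_combination hcast : (1 : ZMod (2 * p + 1)) = 0) hone
           | exact absurd (by linear_combination -hcast : (1 : ZMod (2 * p + 1)) = 0) hone
           | exact absurd (by linear_combination hcast : (3 : ZMod (2 * p + 1)) = 0) hthree
           | exact absurd (by linear_combination -hcast : (3 : ZMod (2 * p + 1)) = 0) hthree)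
  have hpnz1 : ¬ (p : ℤ) ∣ -z1 := fun hd => hpz1 (dvd_neg.mp hd)
  rcases hdvd with hd | hd | hd
  · exact sg_key p hp hodd hθ hnp x1 y1 (-z1) heqa hxy1 hxz1.neg_right hyz1.neg_right
      hpx1 hpy1 hpnz1 hd
  · exact sg_key p hp hodd hθ hnp y1 x1 (-z1) (by linarith) hxy1.symm hyz1.neg_right
      hxz1.neg_right hpy1 hpx1 hpnz1 hd
  · exact sg_key p hp hodd hθ hnp (-z1) x1 y1 (by linarith) hxz1.neg_right.symm
      hyz1.neg_right.symm hxy1 hpnz1 hpx1 hpy1 (dvd_neg.mpr hd)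
end

section
/- Fix an odd prime p and suppose there exist infinitely many primes θ such that there are no two nonzero consecutive p-th power residues modulo θ. Then the Fermat equation z^p = x^p + y^p has no solution in nonzero integers. -/
theorem stmt_14 (p : ℕ) (hp : p.Prime) (hodd : Odd p)
    (hinf : {θ : ℕ | θ.Prime ∧ NC p θ}.Infinite) :
    ∀ x y z : ℤ, x ≠ 0 → y ≠ 0 → z ≠ 0 → z ^ p ≠ x ^ p + y ^ p := by
  intro x y z hx hy hz heq
  set N : ℕ := (x * y * z).natAbs with hN
  have hN0 : 0 < N := by
    simp only [hN, Int.natAbs_pos]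
    exact mul_ne_zero (mul_ne_zero hx hy) hz
  have hsub : {θ : ℕ | θ.Prime ∧ NC p θ} ⊆ {θ : ℕ | θ ∣ N} := by
    rintro θ ⟨hθ, hnc⟩
    haveI : Fact θ.Prime := ⟨hθ⟩
    by_contra hdvd
    apply hnc
    have hdvd' : ¬ ((θ : ℤ) ∣ x * y * z) := by
      exact fun h => hdvd (Int.natCast_dvd.mp h)
    have hX : (x : ZMod θ) ≠ 0 := by
      rw [Ne, ZMod.intCast_zmod_eq_zero_iff_dvd]
      exact fun h => hdvd' (h.trans ((dvd_mul_right x y).mul_right z))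
    have hY : (y : ZMod θ) ≠ 0 := by
      rw [Ne, ZMod.intCast_zmod_eq_zero_iff_dvd]
      exact fun h => hdvd' (h.trans ((dvd_mul_left y x).mul_right z))
    have hZ : (z : ZMod θ) ≠ 0 := by
      rw [Ne, ZMod.intCast_zmod_eq_zero_iff_dvd]
      exact fun h => hdvd' (h.trans (dvd_mul_left z (x * y)))
    have hcast : (z : ZMod θ) ^ p = (x : ZMod θ) ^ p + (y : ZMod θ) ^ p := by
      have := congrArg (fun t : ℤ => (t : ZMod θ)) heq
      push_cast at this
      exact this
    refine ⟨((x : ZMod θ) * ((y : ZMod θ))⁻¹) ^ p, pow_ne_zero _ (mul_ne_zero hX (inv_ne_zero hY)), ?_, ⟨_, rfl⟩, ⟨(z : ZMod θ) * ((y : ZMod θ))⁻¹, ?_⟩⟩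
    · have key : ((x : ZMod θ) * ((y : ZMod θ))⁻¹) ^ p + 1 =
          ((z : ZMod θ) * ((y : ZMod θ))⁻¹) ^ p := by
        rw [mul_pow, mul_pow, inv_pow, hcast, add_mul, mul_inv_cancel₀ (pow_ne_zero _ hY)]
      rw [key]
      exact pow_ne_zero _ (mul_ne_zero hZ (inv_ne_zero hY))
    · rw [mul_pow, mul_pow, inv_pow, hcast, add_mul, mul_inv_cancel₀ (pow_ne_zero _ hY)]
  have hfin : {θ : ℕ | θ ∣ N}.Finite :=
    Set.Finite.subset (Set.finite_Iic N) (fun θ hθ => Nat.le_of_dvd hN0 hθ)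
  exact absurd hfin (hinf.mono hsub)
end

section
/- For p = 3, the set of primes θ satisfying Condition NC (no two nonzero consecutive cubic residues mod θ) is finite; in particular, Germain's Grand Plan fails to prove Fermat's Last Theorem for exponent 3 by this route. -/
def IsCube {M : Type*} [Monoid M] (x : M) : Prop := ∃ a, a ^ 3 = x

theorem eq_one_or_mul_eq_one_or_mul_sq_eq_one_of_card_dvd_three {G : Type*} [Group G]
    (hG : Nat.card G ∣ 3) (u v : G) : u = 1 ∨ v = 1 ∨ u * v = 1 ∨ u * v ^ 2 = 1 := by
  rcases (Nat.dvd_prime Nat.prime_three).1 hG with h1 | h3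
  · have : Subsingleton G := (Nat.card_eq_one_iff_unique.1 h1).1
    exact Or.inl (Subsingleton.elim _ _)
  · let e : G ≃* Multiplicative (ZMod 3) := mulEquivOfPrimeCardEq h3 (by simp)
    have key : ∀ a b : Multiplicative (ZMod 3), a = 1 ∨ b = 1 ∨ a * b = 1 ∨ a * b ^ 2 = 1 := by
      decide
    simpa only [← map_mul, ← map_pow, MulEquiv.map_eq_one_iff] using key (e u) (e v)

theorem isCube_or_isCube_or_isCube_mul_or_isCube_mul_sq {F : Type*} [Field F] [Finite F]
    {x y : F} (hx : x ≠ 0) (hy : y ≠ 0) :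
    IsCube x ∨ IsCube y ∨ IsCube (x * y) ∨ IsCube (x * y ^ 2) := by
  set H := (powMonoidHom 3 : Fˣ →* Fˣ).range
  have hH : Nat.card (Fˣ ⧸ H) ∣ 3 := by
    rw [← Subgroup.index_eq_card, IsCyclic.index_powMonoidHom_range]
    exact Nat.gcd_dvd_right _ _
  have isCube_of_mk_eq_one (u : Fˣ) (hu : (u : Fˣ ⧸ H) = 1) : IsCube (u : F) := by
    obtain ⟨a, rfl⟩ := (QuotientGroup.eq_one_iff u).1 hu
    exact ⟨a, by simp⟩
  have hcases := eq_one_or_mul_eq_one_or_mul_sq_eq_one_of_card_dvd_three hH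
    (Units.mk0 x hx) (Units.mk0 y hy)
  simp only [← QuotientGroup.mk_mul, ← QuotientGroup.mk_pow] at hcases
  refine hcases.imp ?_ (Or.imp ?_ (Or.imp ?_ ?_)) <;>
    exact fun h ↦ by simpa using isCube_of_mk_eq_one _ h

theorem exists_consecutive_nonzero_cubes {F : Type*} [Field F] [Finite F]
    (h2 : (2 : F) ≠ 0) (h3 : (3 : F) ≠ 0) (h7 : (7 : F) ≠ 0) (h11 : (11 : F) ≠ 0)
    (h13 : (13 : F) ≠ 0) : ∃ r : F, r ≠ 0 ∧ r + 1 ≠ 0 ∧ IsCube r ∧ IsCube (r + 1) := by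
  rcases isCube_or_isCube_or_isCube_mul_or_isCube_mul_sq (pow_ne_zero 2 h3) h7 with h | h | h | h
  · have h89 : (2 : F) ^ 3 + 1 = 3 ^ 2 := by norm_num
    exact ⟨2 ^ 3, pow_ne_zero _ h2, h89 ▸ pow_ne_zero _ h3, ⟨2, rfl⟩, h89 ▸ h⟩
  · have h78 : (7 : F) + 1 = 2 ^ 3 := by norm_num
    exact ⟨7, h7, h78 ▸ pow_ne_zero _ h2, h, h78 ▸ ⟨2, rfl⟩⟩
  · have h6364 : (3 : F) ^ 2 * 7 + 1 = (2 ^ 2) ^ 3 := by norm_num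
    exact ⟨3 ^ 2 * 7, mul_ne_zero (pow_ne_zero _ h3) h7, h6364 ▸ pow_ne_zero _ (pow_ne_zero _ h2),
      h, h6364 ▸ ⟨2 ^ 2, rfl⟩⟩
  · obtain ⟨a, ha⟩ := h
    have key : (13 / 11 : F) ^ 3 + 1 = (2 * a / 11) ^ 3 := by
      rw [div_pow, div_pow, mul_pow, ha]
      field_simp
      norm_num
    have ha0 : a ≠ 0 := by
      rintro rfl
      simp [h3, h7] at ha
    exact ⟨(13 / 11) ^ 3, pow_ne_zero _ (div_ne_zero h13 h11),
      key ▸ pow_ne_zero _ (div_ne_zero (mul_ne_zero h2 ha0) h11), ⟨_, rfl⟩, key ▸ ⟨_, rfl⟩⟩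

theorem stmt_15 : {θ : ℕ | θ.Prime ∧ NC 3 θ}.Finite := by
  refine (Set.toFinite ({2, 3, 7, 11, 13} : Set ℕ)).subset ?_
  rintro θ ⟨hθ, hnc⟩
  by_contra hθS
  have : Fact θ.Prime := ⟨hθ⟩
  have cast_ne_zero (p : ℕ) (hp : p.Prime) (hpθ : θ ≠ p) : (p : ZMod θ) ≠ 0 := by
    rw [Ne, ZMod.natCast_eq_zero_iff, Nat.prime_dvd_prime_iff_eq hθ hp]
    exact hpθ
  simp only [Set.mem_insert_iff, Set.mem_singleton_iff, not_or] at hθS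
  obtain ⟨h2, h3, h7, h11, h13⟩ := hθS
  exact hnc <| exists_consecutive_nonzero_cubes
    (by exact_mod_cast cast_ne_zero 2 Nat.prime_two h2)
    (by exact_mod_cast cast_ne_zero 3 Nat.prime_three h3)
    (by exact_mod_cast cast_ne_zero 7 (by norm_num) h7)
    (by exact_mod_cast cast_ne_zero 11 (by norm_num) h11)
    (by exact_mod_cast cast_ne_zero 13 (by norm_num) h13)
end

section
/- For p = 5 and θ = 11, in any integer solution to z^5 = x^5 + y^5, one of x, y, z is divisible by 11, and moreover one of x, y, z is divisible by 25. -/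
private lemma sg_dvd5_iff (u : ℤ) : (5:ℤ) ∣ u ↔ ∃ k : ZMod 25, (u : ZMod 25) = 5 * k := by
  constructor
  · rintro ⟨k, rfl⟩; exact ⟨(k : ZMod 25), by push_cast; ring⟩
  · rintro ⟨k, hk⟩
    have hK : ((k.val : ℕ) : ZMod 25) = k := by rw [ZMod.natCast_val, ZMod.cast_id]
    have h0 : ((u - 5 * (k.val : ℤ) : ℤ) : ZMod 25) = 0 := by
      push_cast
      rw [hk, hK]; ring
    obtain ⟨j, hj⟩ := (ZMod.intCast_zmod_eq_zero_iff_dvd _ 25).mp h0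
    push_cast at hj
    exact ⟨(k.val : ℤ) + 5 * j, by linarith⟩

private lemma sg_prime5 : Prime (5 : ℤ) := by norm_num

/-- Main Sophie Germain step: if `w^5 = u^5 + v^5` with `u, v` coprime,
`5 ∤ u`, and `5 ∣ w`, then `25 ∣ w`. -/
private lemma sg_key_s18 (u v w : ℤ) (hco : IsCoprime u v) (hu : ¬ (5:ℤ) ∣ u)
    (hw5 : (5:ℤ) ∣ w) (h : w ^ 5 = u ^ 5 + v ^ 5) : (25:ℤ) ∣ w := by
  by_contra h25
  obtain ⟨m, hm⟩ := hw5
  have hm5 : ¬ (5:ℤ) ∣ m := by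
    rintro ⟨k, rfl⟩; exact h25 ⟨k, by rw [hm]; ring⟩
  have hv : ¬ (5:ℤ) ∣ v := by
    intro hdv
    apply hu
    have : (5:ℤ) ∣ u ^ 5 := by
      have h1 : u ^ 5 = w ^ 5 - v ^ 5 := by linarith
      rw [h1]
      exact dvd_sub (dvd_pow ⟨m, hm⟩ (by norm_num)) (dvd_pow hdv (by norm_num))
    exact sg_prime5.dvd_of_dvd_pow this
  -- 5 ∣ u + v
  have h5uv : (5:ℤ) ∣ u + v := by
    have hcast : ((u : ZMod 5) + v) = 0 := by
      have hw0 : ((w : ℤ) : ZMod 5) = 0 :=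
        (ZMod.intCast_zmod_eq_zero_iff_dvd _ 5).mpr ⟨m, hm⟩
      have hh : ((w : ZMod 5))^5 = (u : ZMod 5)^5 + (v : ZMod 5)^5 := by
        have := congrArg (fun t : ℤ => (t : ZMod 5)) h
        push_cast at this
        exact this
      revert hw0 hh
      generalize (u : ZMod 5) = A
      generalize (v : ZMod 5) = B
      generalize (w : ZMod 5) = W
      revert A B W
      decide
    have : (((u + v : ℤ)) : ZMod 5) = 0 := by push_cast; exact hcast
    exact_mod_cast (ZMod.intCast_zmod_eq_zero_iff_dvd _ 5).mp this
  -- Q ≡ 5 [ZMOD 25]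
  set Q : ℤ := u^4 - u^3*v + u^2*v^2 - u*v^3 + v^4 with hQdef
  have hQ : ((Q : ℤ) : ZMod 25) = 5 := by
    have L2 : ∀ A B : ZMod 25, (∃ k, (A+B) = 5*k) → ¬ (∃ k, A = 5*k) →
        A^4 - A^3*B + A^2*B^2 - A*B^3 + B^4 = 5 := by decide
    have h1 : ∃ k : ZMod 25, ((u : ZMod 25) + v) = 5 * k := by
      obtain ⟨k, hk⟩ := (sg_dvd5_iff (u+v)).mp h5uv
      push_cast at hk
      exact ⟨k, hk⟩
    have h2 : ¬ ∃ k : ZMod 25, (u : ZMod 25) = 5 * k := fun hex => hu ((sg_dvd5_iff u).mpr hex)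
    have := L2 (u : ZMod 25) (v : ZMod 25) h1 h2
    rw [hQdef]
    push_cast
    exact this
  -- 25 ∣ u + v
  obtain ⟨s, hs⟩ := h5uv
  obtain ⟨t, ht⟩ := (ZMod.intCast_zmod_eq_zero_iff_dvd (Q - 5) 25).mp (by push_cast; rw [hQ]; ring)
  have hQform : Q = 5 * (1 + 5 * t) := by push_cast at ht; linarith
  have hfac : w ^ 5 = (u + v) * Q := by rw [hQdef]; rw [h]; ring
  have hcancel : 125 * m ^ 5 = s * (1 + 5 * t) := by
    have h1 : (25:ℤ) * (125 * m ^ 5) = 25 * (s * (1 + 5 * t)) := by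
      have := hfac
      rw [hm, hs, hQform] at this
      ring_nf at this ⊢
      linarith
    exact mul_left_cancel₀ (by norm_num : (25:ℤ) ≠ 0) h1
  have h5s : (5:ℤ) ∣ s := by
    have h5div : (5:ℤ) ∣ s * (1 + 5 * t) := ⟨25 * m ^ 5, by linarith⟩
    rcases sg_prime5.dvd_mul.mp h5div with hd | hd
    · exact hd
    · exfalso
      obtain ⟨e, he⟩ := hd
      omega
  have h25uv : (25:ℤ) ∣ u + v := by
    obtain ⟨e, he⟩ := h5s
    exact ⟨e, by rw [hs, he]; ring⟩
  -- coprimality facts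
  have hcwu : IsCoprime w u := by
    have h1 : IsCoprime (v ^ 5 + u * u ^ 4) u := (hco.symm.pow_left).add_mul_left_left (u ^ 4)
    have h2 : v ^ 5 + u * u ^ 4 = w ^ 5 := by rw [h]; ring
    rw [h2] at h1
    exact (IsCoprime.pow_left_iff (by norm_num)).mp h1
  have hcwv : IsCoprime w v := by
    have h1 : IsCoprime (u ^ 5 + v * v ^ 4) v := (hco.pow_left).add_mul_left_left (v ^ 4)
    have h2 : u ^ 5 + v * v ^ 4 = w ^ 5 := by rw [h]; ring
    rw [h2] at h1
    exact (IsCoprime.pow_left_iff (by norm_num)).mp h1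
  -- w - u = c^5
  have hwu5 : ¬ (5:ℤ) ∣ (w - u) := by
    intro hd
    exact hu (by have : (5:ℤ) ∣ w - (w - u) := dvd_sub ⟨m, hm⟩ hd; simpa using this)
  have factor_pow : ∀ a b : ℤ, IsCoprime b a → ¬ (5:ℤ) ∣ (b - a) → ¬ (5:ℤ) ∣ a →
      ∃ c : ℤ, b - a = c ^ 5 → True := fun _ _ _ _ _ => ⟨0, fun _ => trivial⟩
  have hcube : ∀ a e : ℤ, IsCoprime w a → ¬ (5:ℤ) ∣ a → e ^ 5 = w ^ 5 - a ^ 5 →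
      ∃ c : ℤ, w - a = c ^ 5 := by
    intro a e hcwa ha he
    have hR : (w - a) * (w^4 + w^3*a + w^2*a^2 + w*a^3 + a^4) = e ^ 5 := by rw [he]; ring
    have hcop : IsCoprime (w - a) (w^4 + w^3*a + w^2*a^2 + w*a^3 + a^4) := by
      have hc5 : IsCoprime (w - a) (5 : ℤ) := by
        have h5wa : ¬ (5:ℤ) ∣ (w - a) := by
          intro hd
          exact ha (by have : (5:ℤ) ∣ w - (w - a) := dvd_sub ⟨m, hm⟩ hd; simpa using this)
        exact ((sg_prime5.coprime_iff_not_dvd).mpr h5wa).symm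
      have hca : IsCoprime (w - a) a := by
        have : IsCoprime (w + a * (-1)) a := hcwa.add_mul_left_left (-1)
        simpa [sub_eq_add_neg] using this
      have hbase : IsCoprime (w - a) (5 * a ^ 4) := hc5.mul_right (hca.pow_right)
      have h2 : IsCoprime (w - a) (5 * a ^ 4 + (w - a) * (w^3 + 2*a*w^2 + 3*a^2*w + 4*a^3)) :=
        hbase.add_mul_left_right _
      have h3 : 5 * a ^ 4 + (w - a) * (w^3 + 2*a*w^2 + 3*a^2*w + 4*a^3)
          = w^4 + w^3*a + w^2*a^2 + w*a^3 + a^4 := by ring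
      rwa [h3] at h2
    exact Int.eq_pow_of_mul_eq_pow_odd_left hcop ⟨2, by norm_num⟩ hR
  obtain ⟨c, hc⟩ := hcube u v hcwu hu (by linarith)
  obtain ⟨b, hb⟩ := hcube v u hcwv hv (by linarith)
  -- final contradiction mod 25
  have hsum : b ^ 5 + c ^ 5 = 2 * w - (u + v) := by rw [← hb, ← hc]; ring
  have L3 : ∀ B C M : ZMod 25, ¬ (∃ k, M = 5*k) → B^5 + C^5 ≠ 10*M := by decide
  have hM : ¬ ∃ k : ZMod 25, (m : ZMod 25) = 5 * k := fun hex => hm5 ((sg_dvd5_iff m).mpr hex)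
  apply L3 (b : ZMod 25) (c : ZMod 25) (m : ZMod 25) hM
  obtain ⟨e, he⟩ := h25uv
  have h0 : ((b ^ 5 + c ^ 5 - 10 * m : ℤ) : ZMod 25) = 0 :=
    (ZMod.intCast_zmod_eq_zero_iff_dvd _ 25).mpr ⟨-e, by rw [show (b:ℤ) ^ 5 + c ^ 5 - 10 * m = 2 * w - (u + v) - 10 * m from by linarith, hm, he]; ring⟩
  push_cast at h0
  linear_combination h0

/-- The coprime case. -/
private lemma sg_coprime (x y z : ℤ) (hco : IsCoprime x y) (h : z ^ 5 = x ^ 5 + y ^ 5) :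
    (25:ℤ) ∣ x ∨ (25:ℤ) ∣ y ∨ (25:ℤ) ∣ z := by
  have hnot55 : ¬ ((5:ℤ) ∣ x ∧ (5:ℤ) ∣ y) := by
    rintro ⟨h1, h2⟩
    have := hco.isUnit_of_dvd' h1 h2
    rw [Int.isUnit_iff] at this
    omega
  have hzy : IsCoprime z y := by
    have h1 : IsCoprime (x ^ 5 + y * y ^ 4) y := (hco.pow_left).add_mul_left_left (y ^ 4)
    have h2 : x ^ 5 + y * y ^ 4 = z ^ 5 := by rw [h]; ring
    rw [h2] at h1
    exact (IsCoprime.pow_left_iff (by norm_num)).mp h1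
  have hzx : IsCoprime z x := by
    have h1 : IsCoprime (y ^ 5 + x * x ^ 4) x := (hco.symm.pow_left).add_mul_left_left (x ^ 4)
    have h2 : y ^ 5 + x * x ^ 4 = z ^ 5 := by rw [h]; ring
    rw [h2] at h1
    exact (IsCoprime.pow_left_iff (by norm_num)).mp h1
  -- 5 divides one of x, y, z
  have hfive : (5:ℤ) ∣ x ∨ (5:ℤ) ∣ y ∨ (5:ℤ) ∣ z := by
    have L4 : ∀ A B C : ZMod 25, C^5 = A^5+B^5 →
        (∃ k, A = 5*k) ∨ (∃ k, B = 5*k) ∨ (∃ k, C = 5*k) := by decide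
    have hh : ((z : ZMod 25))^5 = (x : ZMod 25)^5 + (y : ZMod 25)^5 := by
      have := congrArg (fun t : ℤ => (t : ZMod 25)) h
      push_cast at this
      exact this
    rcases L4 _ _ _ hh with h1 | h1 | h1
    · exact Or.inl ((sg_dvd5_iff x).mpr h1)
    · exact Or.inr (Or.inl ((sg_dvd5_iff y).mpr h1))
    · exact Or.inr (Or.inr ((sg_dvd5_iff z).mpr h1))
  rcases hfive with h5 | h5 | h5
  · -- 5 ∣ x : apply key with w = x, u = z, v = -y, x^5 = z^5 + (-y)^5
    left
    have hnz : ¬ (5:ℤ) ∣ z := by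
      intro hdz
      have h5y : (5:ℤ) ∣ y := by
        apply sg_prime5.dvd_of_dvd_pow (n := 5)
        have : y ^ 5 = z ^ 5 - x ^ 5 := by linarith
        rw [this]
        exact dvd_sub (dvd_pow hdz (by norm_num)) (dvd_pow h5 (by norm_num))
      exact hnot55 ⟨h5, h5y⟩
    exact sg_key_s18 z (-y) x (hzy.neg_right) hnz h5 (by ring_nf; linarith)
  · -- 5 ∣ y
    right; left
    have hnz : ¬ (5:ℤ) ∣ z := by
      intro hdz
      have h5x : (5:ℤ) ∣ x := by
        apply sg_prime5.dvd_of_dvd_pow (n := 5)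
        have : x ^ 5 = z ^ 5 - y ^ 5 := by linarith
        rw [this]
        exact dvd_sub (dvd_pow hdz (by norm_num)) (dvd_pow h5 (by norm_num))
      exact hnot55 ⟨h5x, h5⟩
    exact sg_key_s18 z (-x) y (hzx.neg_right) hnz h5 (by ring_nf; linarith)
  · -- 5 ∣ z
    right; right
    have hnx : ¬ (5:ℤ) ∣ x := by
      intro hdx
      have h5y : (5:ℤ) ∣ y := by
        apply sg_prime5.dvd_of_dvd_pow (n := 5)
        have : y ^ 5 = z ^ 5 - x ^ 5 := by linarith
        rw [this]
        exact dvd_sub (dvd_pow h5 (by norm_num)) (dvd_pow hdx (by norm_num))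
      exact hnot55 ⟨hdx, h5y⟩
    exact sg_key_s18 x y z hco hnx h5 h

theorem stmt_18 (x y z : ℤ) (h : z ^ 5 = x ^ 5 + y ^ 5) :
    (11 ∣ x ∨ 11 ∣ y ∨ 11 ∣ z) ∧ (25 ∣ x ∨ 25 ∣ y ∨ 25 ∣ z) := by
  constructor
  · -- mod 11
    have L0 : ∀ A B C : ZMod 11, C^5 = A^5+B^5 → A = 0 ∨ B = 0 ∨ C = 0 := by decide
    have hh : ((z : ZMod 11))^5 = (x : ZMod 11)^5 + (y : ZMod 11)^5 := by
      have := congrArg (fun t : ℤ => (t : ZMod 11)) h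
      push_cast at this
      exact this
    rcases L0 _ _ _ hh with h1 | h1 | h1
    · exact Or.inl (by exact_mod_cast (ZMod.intCast_zmod_eq_zero_iff_dvd _ 11).mp h1)
    · exact Or.inr (Or.inl (by exact_mod_cast (ZMod.intCast_zmod_eq_zero_iff_dvd _ 11).mp h1))
    · exact Or.inr (Or.inr (by exact_mod_cast (ZMod.intCast_zmod_eq_zero_iff_dvd _ 11).mp h1))
  · -- 25 part
    by_cases hx0 : x = 0
    · exact Or.inl (by rw [hx0]; exact dvd_zero 25)
    · set g : ℤ := (Int.gcd x y : ℤ) with hg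
      have hgpos : 0 < Int.gcd x y := Int.gcd_pos_of_ne_zero_left y hx0
      have hgx : g ∣ x := Int.gcd_dvd_left x y
      have hgy : g ∣ y := Int.gcd_dvd_right x y
      have hgz : g ∣ z := by
        rw [← Int.pow_dvd_pow_iff (by norm_num : (5:ℕ) ≠ 0)]
        rw [h]
        exact dvd_add (pow_dvd_pow_of_dvd hgx 5) (pow_dvd_pow_of_dvd hgy 5)
      obtain ⟨x', hx'⟩ := hgx
      obtain ⟨y', hy'⟩ := hgy
      obtain ⟨z', hz'⟩ := hgz
      have hgne : g ≠ 0 := by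
        simp only [hg]
        exact_mod_cast Int.natCast_ne_zero.mpr (by omega : Int.gcd x y ≠ 0)
      have heq : z' ^ 5 = x' ^ 5 + y' ^ 5 := by
        have h1 : g ^ 5 * z' ^ 5 = g ^ 5 * (x' ^ 5 + y' ^ 5) := by
          rw [hx', hy', hz'] at h
          ring_nf at h ⊢
          linarith
        exact mul_left_cancel₀ (pow_ne_zero 5 hgne) h1
      have hco : IsCoprime x' y' := by
        rw [Int.isCoprime_iff_gcd_eq_one]
        have hx'' : x' = x / g := by rw [hx']; rw [Int.mul_ediv_cancel_left _ hgne]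
        have hy'' : y' = y / g := by rw [hy']; rw [Int.mul_ediv_cancel_left _ hgne]
        rw [hx'', hy'']
        exact Int.gcd_div_gcd_div_gcd hgpos
      rcases sg_coprime x' y' z' hco heq with h1 | h1 | h1
      · exact Or.inl (by rw [hx']; exact Dvd.dvd.mul_left h1 g)
      · exact Or.inr (Or.inl (by rw [hy']; exact Dvd.dvd.mul_left h1 g))
      · exact Or.inr (Or.inr (by rw [hz']; exact Dvd.dvd.mul_left h1 g))
end

section
/- For every prime θ with θ ≡ 1 (mod 3) and θ > 13, there exist residues r with r ≢ 0 and r + 1 ≢ 0 (mod θ) such that both r and r+1 are cubic residues modulo θ. -/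
lemma aux_ne (p : ℕ) (hp : Fact p.Prime) (hgt : 13 < p) (i j k l s t : ℕ) :
    ((2^i*3^j*5^k*7^l*11^s*13^t : ℕ) : ZMod p) ≠ 0 := by
  have hq : ∀ q : ℕ, q.Prime → q ≤ 13 → ((q : ℕ) : ZMod p) ≠ 0 := by
    intro q hq hle h0
    rw [ZMod.natCast_eq_zero_iff] at h0
    rcases (Nat.prime_dvd_prime_iff_eq hp.out hq).mp h0 with rfl
    omega
  push_cast
  have h2 := hq 2 (by norm_num) (by norm_num)
  have h3 := hq 3 (by norm_num) (by norm_num)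
  have h5 := hq 5 (by norm_num) (by norm_num)
  have h7 := hq 7 (by norm_num) (by norm_num)
  have h11 := hq 11 (by norm_num) (by norm_num)
  have h13 := hq 13 (by norm_num) (by norm_num)
  push_cast at h2 h3 h5 h7 h11 h13
  exact mul_ne_zero (mul_ne_zero (mul_ne_zero (mul_ne_zero (mul_ne_zero
    (pow_ne_zero _ h2) (pow_ne_zero _ h3)) (pow_ne_zero _ h5)) (pow_ne_zero _ h7))
    (pow_ne_zero _ h11)) (pow_ne_zero _ h13)

lemma aux_leaf (p : ℕ) (hp : Fact p.Prime) (hgt : 13 < p) (m : ℕ) (hm : p - 1 = 3 * m)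
    (ω : ZMod p) (hω3 : ω ^ 3 = 1)
    (cube : ∀ x : ZMod p, x ≠ 0 → x ^ m = 1 → ∃ a : ZMod p, a ^ 3 = x)
    (i j k l s t i' j' k' l' s' t' α β γ δ ε ζ : ℕ)
    (hA : (2 : ZMod p) ^ m = ω ^ α) (hB : (3 : ZMod p) ^ m = ω ^ β)
    (hE : (5 : ZMod p) ^ m = ω ^ γ) (hF : (7 : ZMod p) ^ m = ω ^ δ)
    (hG : (11 : ZMod p) ^ m = ω ^ ε) (hH : (13 : ZMod p) ^ m = ω ^ ζ)
    (hsum : 2^i*3^j*5^k*7^l*11^s*13^t + 1 = 2^i'*3^j'*5^k'*7^l'*11^s'*13^t')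
    (h1 : (α*i+β*j+γ*k+δ*l+ε*s+ζ*t) % 3 = 0)
    (h2 : (α*i'+β*j'+γ*k'+δ*l'+ε*s'+ζ*t') % 3 = 0) :
    ∃ r : ZMod p, r ≠ 0 ∧ r + 1 ≠ 0 ∧ (∃ a : ZMod p, a ^ 3 = r) ∧
      (∃ b : ZMod p, b ^ 3 = r + 1) := by
  have key : ∀ i j k l s t : ℕ, (α*i+β*j+γ*k+δ*l+ε*s+ζ*t) % 3 = 0 →
      ((2^i*3^j*5^k*7^l*11^s*13^t : ℕ) : ZMod p) ^ m = 1 := by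
    intro i j k l s t h
    have : ((2^i*3^j*5^k*7^l*11^s*13^t : ℕ) : ZMod p) ^ m
        = ω ^ (α*i+β*j+γ*k+δ*l+ε*s+ζ*t) := by
      push_cast
      calc ((2:ZMod p)^i*3^j*5^k*7^l*11^s*13^t) ^ m
          = ((2:ZMod p)^m)^i * ((3:ZMod p)^m)^j * ((5:ZMod p)^m)^k * ((7:ZMod p)^m)^l
            * ((11:ZMod p)^m)^s * ((13:ZMod p)^m)^t := by ring
        _ = ω ^ (α*i+β*j+γ*k+δ*l+ε*s+ζ*t) := by rw [hA, hB, hE, hF, hG, hH]; ring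
    rw [this]
    obtain ⟨c, hc⟩ := Nat.dvd_of_mod_eq_zero h
    rw [hc, pow_mul, hω3, one_pow]
  set r : ZMod p := ((2^i*3^j*5^k*7^l*11^s*13^t : ℕ) : ZMod p) with hr
  have hr1 : r + 1 = ((2^i'*3^j'*5^k'*7^l'*11^s'*13^t' : ℕ) : ZMod p) := by
    rw [hr, ← hsum]; push_cast; ring
  refine ⟨r, aux_ne p hp hgt i j k l s t, ?_, ?_, ?_⟩
  · rw [hr1]; exact aux_ne p hp hgt i' j' k' l' s' t'
  · exact cube r (aux_ne p hp hgt i j k l s t) (key i j k l s t h1)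
  · rw [hr1]
    exact cube _ (aux_ne p hp hgt i' j' k' l' s' t') (key i' j' k' l' s' t' h2)


lemma aux_cube (p : ℕ) (hp : Fact p.Prime) (m : ℕ) (hm : p - 1 = 3 * m) (hm0 : m ≠ 0)
    (x : ZMod p) (hx : x ≠ 0) (h : x ^ m = 1) : ∃ a : ZMod p, a ^ 3 = x := by
  obtain ⟨g, hg⟩ := IsCyclic.exists_monoid_generator (α := (ZMod p)ˣ)
  set u : (ZMod p)ˣ := Units.mk0 x hx with hu
  obtain ⟨k, hk⟩ := hg u
  have hcard : orderOf g = p - 1 := by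
    have := orderOf_eq_card_of_forall_mem_zpowers (g := g) (fun y => by
      obtain ⟨n, hn⟩ := hg y
      exact ⟨(n : ℤ), by simpa using hn⟩)
    simpa [Nat.card_eq_fintype_card, ZMod.card_units_eq_totient,
      Nat.totient_prime hp.out] using this
  have hum : u ^ m = 1 := by
    ext
    simpa [hu] using h
  have hdvd : (p - 1) ∣ k * m := by
    rw [← hcard]
    have hk' : g ^ k = u := hk
    have : g ^ (k * m) = 1 := by rw [pow_mul, hk', hum]
    exact orderOf_dvd_of_pow_eq_one this
  rw [hm] at hdvd
  have h3k : 3 ∣ k := by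
    rcases hdvd with ⟨c, hc⟩
    have : k * m = 3 * m * c := hc
    have : k = 3 * c := by
      have hmpos : 0 < m := Nat.pos_of_ne_zero hm0
      nlinarith [Nat.eq_of_mul_eq_mul_right hmpos (show k * m = (3*c) * m by linarith)]
    exact ⟨c, this⟩
  obtain ⟨c, rfl⟩ := h3k
  refine ⟨((g ^ c : (ZMod p)ˣ) : ZMod p), ?_⟩
  have : (g ^ c) ^ 3 = u := by rw [← hk, ← pow_mul, mul_comm]
  calc ((g ^ c : (ZMod p)ˣ) : ZMod p) ^ 3 = (((g ^ c) ^ 3 : (ZMod p)ˣ) : ZMod p) := by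
        push_cast; ring
    _ = x := by rw [this]; simp [hu]


theorem stmt_19 (θ : ℕ) (hθ : θ.Prime) (hcong : θ ≡ 1 [MOD 3]) (h13 : 13 < θ) :
    ∃ r : ZMod θ, r ≠ 0 ∧ r + 1 ≠ 0 ∧ (∃ a : ZMod θ, a ^ 3 = r) ∧
      (∃ b : ZMod θ, b ^ 3 = r + 1) := by
  haveI hpf : Fact θ.Prime := ⟨hθ⟩
  have h3 : 3 ∣ θ - 1 := (Nat.modEq_iff_dvd' (by omega)).mp hcong.symm
  set m : ℕ := (θ - 1) / 3 with hmdef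
  have hm : θ - 1 = 3 * m := (Nat.mul_div_cancel' h3).symm
  have hm0 : m ≠ 0 := by omega
  have cube : ∀ x : ZMod θ, x ≠ 0 → x ^ m = 1 → ∃ a : ZMod θ, a ^ 3 = x :=
    fun x hx h => aux_cube θ hpf m hm hm0 x hx h
  -- element of order 3
  haveI : Fact (Nat.Prime 3) := ⟨by norm_num⟩
  obtain ⟨u, hu⟩ : ∃ u : (ZMod θ)ˣ, orderOf u = 3 := by
    apply exists_prime_orderOf_dvd_card 3
    rw [ZMod.card_units_eq_totient, Nat.totient_prime hθ]
    exact ⟨m, hm⟩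
  set ω : ZMod θ := (u : ZMod θ) with hωdef
  have hω3 : ω ^ 3 = 1 := by
    have := pow_orderOf_eq_one u
    rw [hu] at this
    rw [hωdef, ← Units.val_pow_eq_pow_val, this, Units.val_one]
  have hω1 : ω ≠ 1 := by
    intro h
    have : u = 1 := Units.val_eq_one.mp h
    rw [this] at hu
    simp at hu
  have hsum0 : 1 + ω + ω ^ 2 = 0 := by
    have hfac : (ω - 1) * (1 + ω + ω ^ 2) = 0 := by linear_combination hω3
    rcases mul_eq_zero.mp hfac with h | h
    · exact (hω1 (sub_eq_zero.mp h)).elim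
    · exact h
  have three_roots : ∀ z : ZMod θ, z ^ 3 = 1 → z = ω ^ 0 ∨ z = ω ^ 1 ∨ z = ω ^ 2 := by
    intro z hz
    have hfac : (z - 1) * (z - ω) * (z - ω ^ 2) = 0 := by
      linear_combination hz + (z - z ^ 2) * hsum0 + (z - 1) * hω3
    rcases mul_eq_zero.mp hfac with h | h
    · rcases mul_eq_zero.mp h with h | h
      · exact Or.inl (by rw [pow_zero]; exact sub_eq_zero.mp h)
      · exact Or.inr (Or.inl (by rw [pow_one]; exact sub_eq_zero.mp h))
    · exact Or.inr (Or.inr (sub_eq_zero.mp h))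
  have hqne : ∀ q : ℕ, q.Prime → q ≤ 13 → ((q : ℕ) : ZMod θ) ≠ 0 := by
    intro q hq hle h0
    rw [ZMod.natCast_eq_zero_iff] at h0
    rcases (Nat.prime_dvd_prime_iff_eq hθ hq).mp h0 with rfl
    omega
  have hclass : ∀ q : ℕ, q.Prime → q ≤ 13 →
      ((q : ℕ) : ZMod θ) ^ m = ω ^ 0 ∨ ((q : ℕ) : ZMod θ) ^ m = ω ^ 1 ∨
        ((q : ℕ) : ZMod θ) ^ m = ω ^ 2 := by
    intro q hq hle
    apply three_roots
    rw [← pow_mul, mul_comm m 3, ← hm]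
    exact ZMod.pow_card_sub_one_eq_one (hqne q hq hle)
  have cA := hclass 2 (by norm_num) (by norm_num)
  have cB := hclass 3 (by norm_num) (by norm_num)
  have cE := hclass 5 (by norm_num) (by norm_num)
  have cF := hclass 7 (by norm_num) (by norm_num)
  have cG := hclass 11 (by norm_num) (by norm_num)
  have cH := hclass 13 (by norm_num) (by norm_num)
  push_cast at cA cB cE cF cG cH
  have mkE : ∀ x : ZMod θ, x = ω ^ 0 ∨ x = ω ^ 1 ∨ x = ω ^ 2 → ∃ e : ℕ, x = ω ^ e := by
    rintro x (h | h | h)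
    exacts [⟨0, h⟩, ⟨1, h⟩, ⟨2, h⟩]
  have cA' := mkE _ cA
  have cB' := mkE _ cB
  have cE' := mkE _ cE
  have cF' := mkE _ cF
  have cG' := mkE _ cG
  have cH' := mkE _ cH
  rcases cA with hA | hA | hA
  ·
    obtain ⟨e3, hB⟩ := cB'
    obtain ⟨e5, hE⟩ := cE'
    obtain ⟨e7, hF⟩ := cF'
    obtain ⟨e11, hG⟩ := cG'
    obtain ⟨e13, hH⟩ := cH'
    exact aux_leaf θ hpf h13 m hm ω hω3 cube 0 0 0 0 0 0 1 0 0 0 0 0 0 e3 e5 e7 e11 e13 hA hB hE hF hG hH (by norm_num) (by try simp only [Nat.mul_zero, Nat.add_zero, Nat.zero_add]; try decide) (by try simp only [Nat.mul_zero, Nat.add_zero, Nat.zero_add]; try decide)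
  ·
    rcases cB with hB | hB | hB
    ·
      obtain ⟨e5, hE⟩ := cE'
      obtain ⟨e7, hF⟩ := cF'
      obtain ⟨e11, hG⟩ := cG'
      obtain ⟨e13, hH⟩ := cH'
      exact aux_leaf θ hpf h13 m hm ω hω3 cube 3 0 0 0 0 0 0 2 0 0 0 0 1 0 e5 e7 e11 e13 hA hB hE hF hG hH (by norm_num) (by try simp only [Nat.mul_zero, Nat.add_zero, Nat.zero_add]; try decide) (by try simp only [Nat.mul_zero, Nat.add_zero, Nat.zero_add]; try decide)
    ·
      rcases cE with hE | hE | hE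
      ·
        rcases cF with hF | hF | hF
        ·
          obtain ⟨e11, hG⟩ := cG'
          obtain ⟨e13, hH⟩ := cH'
          exact aux_leaf θ hpf h13 m hm ω hω3 cube 0 0 0 1 0 0 3 0 0 0 0 0 1 1 0 0 e11 e13 hA hB hE hF hG hH (by norm_num) (by try simp only [Nat.mul_zero, Nat.add_zero, Nat.zero_add]; try decide) (by try simp only [Nat.mul_zero, Nat.add_zero, Nat.zero_add]; try decide)
        ·
          obtain ⟨e11, hG⟩ := cG'
          obtain ⟨e13, hH⟩ := cH'
          exact aux_leaf θ hpf h13 m hm ω hω3 cube 0 3 0 0 0 0 2 0 0 1 0 0 1 1 0 1 e11 e13 hA hB hE hF hG hH (by norm_num) (by try simp only [Nat.mul_zero, Nat.add_zero, Nat.zero_add]; try decide) (by try simp only [Nat.mul_zero, Nat.add_zero, Nat.zero_add]; try decide)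
        ·
          rcases cG with hG | hG | hG
          ·
            obtain ⟨e13, hH⟩ := cH'
            exact aux_leaf θ hpf h13 m hm ω hω3 cube 0 0 0 0 1 0 2 1 0 0 0 0 1 1 0 2 0 e13 hA hB hE hF hG hH (by norm_num) (by try simp only [Nat.mul_zero, Nat.add_zero, Nat.zero_add]; try decide) (by try simp only [Nat.mul_zero, Nat.add_zero, Nat.zero_add]; try decide)
          ·
            rcases cH with hH | hH | hH
            ·
              exact aux_leaf θ hpf h13 m hm ω hω3 cube 2 1 0 0 0 0 0 0 0 0 0 1 1 1 0 2 1 0 hA hB hE hF hG hH (by norm_num) (by try simp only [Nat.mul_zero, Nat.add_zero, Nat.zero_add]; try decide) (by try simp only [Nat.mul_zero, Nat.add_zero, Nat.zero_add]; try decide)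
            ·
              exact aux_leaf θ hpf h13 m hm ω hω3 cube 0 0 0 1 1 0 1 1 0 0 0 1 1 1 0 2 1 1 hA hB hE hF hG hH (by norm_num) (by try simp only [Nat.mul_zero, Nat.add_zero, Nat.zero_add]; try decide) (by try simp only [Nat.mul_zero, Nat.add_zero, Nat.zero_add]; try decide)
            ·
              exact aux_leaf θ hpf h13 m hm ω hω3 cube 0 0 2 0 0 0 1 0 0 0 0 1 1 1 0 2 1 2 hA hB hE hF hG hH (by norm_num) (by try simp only [Nat.mul_zero, Nat.add_zero, Nat.zero_add]; try decide) (by try simp only [Nat.mul_zero, Nat.add_zero, Nat.zero_add]; try decide)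
          ·
            obtain ⟨e13, hH⟩ := cH'
            exact aux_leaf θ hpf h13 m hm ω hω3 cube 0 1 0 1 0 0 1 0 0 0 1 0 1 1 0 2 2 e13 hA hB hE hF hG hH (by norm_num) (by try simp only [Nat.mul_zero, Nat.add_zero, Nat.zero_add]; try decide) (by try simp only [Nat.mul_zero, Nat.add_zero, Nat.zero_add]; try decide)
      ·
        rcases cF with hF | hF | hF
        ·
          obtain ⟨e11, hG⟩ := cG'
          obtain ⟨e13, hH⟩ := cH'
          exact aux_leaf θ hpf h13 m hm ω hω3 cube 0 0 0 1 0 0 3 0 0 0 0 0 1 1 1 0 e11 e13 hA hB hE hF hG hH (by norm_num) (by try simp only [Nat.mul_zero, Nat.add_zero, Nat.zero_add]; try decide) (by try simp only [Nat.mul_zero, Nat.add_zero, Nat.zero_add]; try decide)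
        ·
          obtain ⟨e11, hG⟩ := cG'
          obtain ⟨e13, hH⟩ := cH'
          exact aux_leaf θ hpf h13 m hm ω hω3 cube 0 3 0 0 0 0 2 0 0 1 0 0 1 1 1 1 e11 e13 hA hB hE hF hG hH (by norm_num) (by try simp only [Nat.mul_zero, Nat.add_zero, Nat.zero_add]; try decide) (by try simp only [Nat.mul_zero, Nat.add_zero, Nat.zero_add]; try decide)
        ·
          obtain ⟨e11, hG⟩ := cG'
          obtain ⟨e13, hH⟩ := cH'
          exact aux_leaf θ hpf h13 m hm ω hω3 cube 2 0 1 0 0 0 0 1 0 1 0 0 1 1 1 2 e11 e13 hA hB hE hF hG hH (by norm_num) (by try simp only [Nat.mul_zero, Nat.add_zero, Nat.zero_add]; try decide) (by try simp only [Nat.mul_zero, Nat.add_zero, Nat.zero_add]; try decide)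
      ·
        rcases cF with hF | hF | hF
        ·
          obtain ⟨e11, hG⟩ := cG'
          obtain ⟨e13, hH⟩ := cH'
          exact aux_leaf θ hpf h13 m hm ω hω3 cube 0 0 0 1 0 0 3 0 0 0 0 0 1 1 2 0 e11 e13 hA hB hE hF hG hH (by norm_num) (by try simp only [Nat.mul_zero, Nat.add_zero, Nat.zero_add]; try decide) (by try simp only [Nat.mul_zero, Nat.add_zero, Nat.zero_add]; try decide)
        ·
          obtain ⟨e11, hG⟩ := cG'
          obtain ⟨e13, hH⟩ := cH'
          exact aux_leaf θ hpf h13 m hm ω hω3 cube 0 3 0 0 0 0 2 0 0 1 0 0 1 1 2 1 e11 e13 hA hB hE hF hG hH (by norm_num) (by try simp only [Nat.mul_zero, Nat.add_zero, Nat.zero_add]; try decide) (by try simp only [Nat.mul_zero, Nat.add_zero, Nat.zero_add]; try decide)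
        ·
          obtain ⟨e11, hG⟩ := cG'
          obtain ⟨e13, hH⟩ := cH'
          exact aux_leaf θ hpf h13 m hm ω hω3 cube 1 0 0 1 0 0 0 1 1 0 0 0 1 1 2 2 e11 e13 hA hB hE hF hG hH (by norm_num) (by try simp only [Nat.mul_zero, Nat.add_zero, Nat.zero_add]; try decide) (by try simp only [Nat.mul_zero, Nat.add_zero, Nat.zero_add]; try decide)
    ·
      rcases cE with hE | hE | hE
      ·
        obtain ⟨e7, hF⟩ := cF'
        obtain ⟨e11, hG⟩ := cG'
        obtain ⟨e13, hH⟩ := cH'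
        exact aux_leaf θ hpf h13 m hm ω hω3 cube 0 0 1 0 0 0 1 1 0 0 0 0 1 2 0 e7 e11 e13 hA hB hE hF hG hH (by norm_num) (by try simp only [Nat.mul_zero, Nat.add_zero, Nat.zero_add]; try decide) (by try simp only [Nat.mul_zero, Nat.add_zero, Nat.zero_add]; try decide)
      ·
        rcases cF with hF | hF | hF
        ·
          obtain ⟨e11, hG⟩ := cG'
          obtain ⟨e13, hH⟩ := cH'
          exact aux_leaf θ hpf h13 m hm ω hω3 cube 1 1 0 0 0 0 0 0 0 1 0 0 1 2 1 0 e11 e13 hA hB hE hF hG hH (by norm_num) (by try simp only [Nat.mul_zero, Nat.add_zero, Nat.zero_add]; try decide) (by try simp only [Nat.mul_zero, Nat.add_zero, Nat.zero_add]; try decide)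
        ·
          obtain ⟨e11, hG⟩ := cG'
          obtain ⟨e13, hH⟩ := cH'
          exact aux_leaf θ hpf h13 m hm ω hω3 cube 2 0 1 0 0 0 0 1 0 1 0 0 1 2 1 1 e11 e13 hA hB hE hF hG hH (by norm_num) (by try simp only [Nat.mul_zero, Nat.add_zero, Nat.zero_add]; try decide) (by try simp only [Nat.mul_zero, Nat.add_zero, Nat.zero_add]; try decide)
        ·
          obtain ⟨e11, hG⟩ := cG'
          obtain ⟨e13, hH⟩ := cH'
          exact aux_leaf θ hpf h13 m hm ω hω3 cube 1 0 0 1 0 0 0 1 1 0 0 0 1 2 1 2 e11 e13 hA hB hE hF hG hH (by norm_num) (by try simp only [Nat.mul_zero, Nat.add_zero, Nat.zero_add]; try decide) (by try simp only [Nat.mul_zero, Nat.add_zero, Nat.zero_add]; try decide)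
      ·
        rcases cF with hF | hF | hF
        ·
          obtain ⟨e11, hG⟩ := cG'
          obtain ⟨e13, hH⟩ := cH'
          exact aux_leaf θ hpf h13 m hm ω hω3 cube 1 1 0 0 0 0 0 0 0 1 0 0 1 2 2 0 e11 e13 hA hB hE hF hG hH (by norm_num) (by try simp only [Nat.mul_zero, Nat.add_zero, Nat.zero_add]; try decide) (by try simp only [Nat.mul_zero, Nat.add_zero, Nat.zero_add]; try decide)
        ·
          obtain ⟨e11, hG⟩ := cG'
          obtain ⟨e13, hH⟩ := cH'
          exact aux_leaf θ hpf h13 m hm ω hω3 cube 0 3 0 0 0 0 2 0 0 1 0 0 1 2 2 1 e11 e13 hA hB hE hF hG hH (by norm_num) (by try simp only [Nat.mul_zero, Nat.add_zero, Nat.zero_add]; try decide) (by try simp only [Nat.mul_zero, Nat.add_zero, Nat.zero_add]; try decide)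
        ·
          obtain ⟨e11, hG⟩ := cG'
          obtain ⟨e13, hH⟩ := cH'
          exact aux_leaf θ hpf h13 m hm ω hω3 cube 0 2 0 1 0 0 6 0 0 0 0 0 1 2 2 2 e11 e13 hA hB hE hF hG hH (by norm_num) (by try simp only [Nat.mul_zero, Nat.add_zero, Nat.zero_add]; try decide) (by try simp only [Nat.mul_zero, Nat.add_zero, Nat.zero_add]; try decide)
  ·
    rcases cB with hB | hB | hB
    ·
      obtain ⟨e5, hE⟩ := cE'
      obtain ⟨e7, hF⟩ := cF'
      obtain ⟨e11, hG⟩ := cG'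
      obtain ⟨e13, hH⟩ := cH'
      exact aux_leaf θ hpf h13 m hm ω hω3 cube 3 0 0 0 0 0 0 2 0 0 0 0 2 0 e5 e7 e11 e13 hA hB hE hF hG hH (by norm_num) (by try simp only [Nat.mul_zero, Nat.add_zero, Nat.zero_add]; try decide) (by try simp only [Nat.mul_zero, Nat.add_zero, Nat.zero_add]; try decide)
    ·
      rcases cE with hE | hE | hE
      ·
        obtain ⟨e7, hF⟩ := cF'
        obtain ⟨e11, hG⟩ := cG'
        obtain ⟨e13, hH⟩ := cH'
        exact aux_leaf θ hpf h13 m hm ω hω3 cube 0 0 1 0 0 0 1 1 0 0 0 0 2 1 0 e7 e11 e13 hA hB hE hF hG hH (by norm_num) (by try simp only [Nat.mul_zero, Nat.add_zero, Nat.zero_add]; try decide) (by try simp only [Nat.mul_zero, Nat.add_zero, Nat.zero_add]; try decide)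
      ·
        rcases cF with hF | hF | hF
        ·
          obtain ⟨e11, hG⟩ := cG'
          obtain ⟨e13, hH⟩ := cH'
          exact aux_leaf θ hpf h13 m hm ω hω3 cube 1 1 0 0 0 0 0 0 0 1 0 0 2 1 1 0 e11 e13 hA hB hE hF hG hH (by norm_num) (by try simp only [Nat.mul_zero, Nat.add_zero, Nat.zero_add]; try decide) (by try simp only [Nat.mul_zero, Nat.add_zero, Nat.zero_add]; try decide)
        ·
          obtain ⟨e11, hG⟩ := cG'
          obtain ⟨e13, hH⟩ := cH'
          exact aux_leaf θ hpf h13 m hm ω hω3 cube 0 2 0 1 0 0 6 0 0 0 0 0 2 1 1 1 e11 e13 hA hB hE hF hG hH (by norm_num) (by try simp only [Nat.mul_zero, Nat.add_zero, Nat.zero_add]; try decide) (by try simp only [Nat.mul_zero, Nat.add_zero, Nat.zero_add]; try decide)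
        ·
          obtain ⟨e11, hG⟩ := cG'
          obtain ⟨e13, hH⟩ := cH'
          exact aux_leaf θ hpf h13 m hm ω hω3 cube 0 3 0 0 0 0 2 0 0 1 0 0 2 1 1 2 e11 e13 hA hB hE hF hG hH (by norm_num) (by try simp only [Nat.mul_zero, Nat.add_zero, Nat.zero_add]; try decide) (by try simp only [Nat.mul_zero, Nat.add_zero, Nat.zero_add]; try decide)
      ·
        rcases cF with hF | hF | hF
        ·
          obtain ⟨e11, hG⟩ := cG'
          obtain ⟨e13, hH⟩ := cH'
          exact aux_leaf θ hpf h13 m hm ω hω3 cube 1 1 0 0 0 0 0 0 0 1 0 0 2 1 2 0 e11 e13 hA hB hE hF hG hH (by norm_num) (by try simp only [Nat.mul_zero, Nat.add_zero, Nat.zero_add]; try decide) (by try simp only [Nat.mul_zero, Nat.add_zero, Nat.zero_add]; try decide)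
        ·
          obtain ⟨e11, hG⟩ := cG'
          obtain ⟨e13, hH⟩ := cH'
          exact aux_leaf θ hpf h13 m hm ω hω3 cube 1 0 0 1 0 0 0 1 1 0 0 0 2 1 2 1 e11 e13 hA hB hE hF hG hH (by norm_num) (by try simp only [Nat.mul_zero, Nat.add_zero, Nat.zero_add]; try decide) (by try simp only [Nat.mul_zero, Nat.add_zero, Nat.zero_add]; try decide)
        ·
          obtain ⟨e11, hG⟩ := cG'
          obtain ⟨e13, hH⟩ := cH'
          exact aux_leaf θ hpf h13 m hm ω hω3 cube 2 0 1 0 0 0 0 1 0 1 0 0 2 1 2 2 e11 e13 hA hB hE hF hG hH (by norm_num) (by try simp only [Nat.mul_zero, Nat.add_zero, Nat.zero_add]; try decide) (by try simp only [Nat.mul_zero, Nat.add_zero, Nat.zero_add]; try decide)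
    ·
      rcases cE with hE | hE | hE
      ·
        rcases cF with hF | hF | hF
        ·
          obtain ⟨e11, hG⟩ := cG'
          obtain ⟨e13, hH⟩ := cH'
          exact aux_leaf θ hpf h13 m hm ω hω3 cube 0 0 0 1 0 0 3 0 0 0 0 0 2 2 0 0 e11 e13 hA hB hE hF hG hH (by norm_num) (by try simp only [Nat.mul_zero, Nat.add_zero, Nat.zero_add]; try decide) (by try simp only [Nat.mul_zero, Nat.add_zero, Nat.zero_add]; try decide)
        ·
          rcases cG with hG | hG | hG
          ·
            obtain ⟨e13, hH⟩ := cH'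
            exact aux_leaf θ hpf h13 m hm ω hω3 cube 0 0 0 0 1 0 2 1 0 0 0 0 2 2 0 1 0 e13 hA hB hE hF hG hH (by norm_num) (by try simp only [Nat.mul_zero, Nat.add_zero, Nat.zero_add]; try decide) (by try simp only [Nat.mul_zero, Nat.add_zero, Nat.zero_add]; try decide)
          ·
            obtain ⟨e13, hH⟩ := cH'
            exact aux_leaf θ hpf h13 m hm ω hω3 cube 0 1 0 1 0 0 1 0 0 0 1 0 2 2 0 1 1 e13 hA hB hE hF hG hH (by norm_num) (by try simp only [Nat.mul_zero, Nat.add_zero, Nat.zero_add]; try decide) (by try simp only [Nat.mul_zero, Nat.add_zero, Nat.zero_add]; try decide)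
          ·
            rcases cH with hH | hH | hH
            ·
              exact aux_leaf θ hpf h13 m hm ω hω3 cube 2 1 0 0 0 0 0 0 0 0 0 1 2 2 0 1 2 0 hA hB hE hF hG hH (by norm_num) (by try simp only [Nat.mul_zero, Nat.add_zero, Nat.zero_add]; try decide) (by try simp only [Nat.mul_zero, Nat.add_zero, Nat.zero_add]; try decide)
            ·
              exact aux_leaf θ hpf h13 m hm ω hω3 cube 0 0 2 0 0 0 1 0 0 0 0 1 2 2 0 1 2 1 hA hB hE hF hG hH (by norm_num) (by try simp only [Nat.mul_zero, Nat.add_zero, Nat.zero_add]; try decide) (by try simp only [Nat.mul_zero, Nat.add_zero, Nat.zero_add]; try decide)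
            ·
              exact aux_leaf θ hpf h13 m hm ω hω3 cube 0 0 0 1 1 0 1 1 0 0 0 1 2 2 0 1 2 2 hA hB hE hF hG hH (by norm_num) (by try simp only [Nat.mul_zero, Nat.add_zero, Nat.zero_add]; try decide) (by try simp only [Nat.mul_zero, Nat.add_zero, Nat.zero_add]; try decide)
        ·
          obtain ⟨e11, hG⟩ := cG'
          obtain ⟨e13, hH⟩ := cH'
          exact aux_leaf θ hpf h13 m hm ω hω3 cube 0 3 0 0 0 0 2 0 0 1 0 0 2 2 0 2 e11 e13 hA hB hE hF hG hH (by norm_num) (by try simp only [Nat.mul_zero, Nat.add_zero, Nat.zero_add]; try decide) (by try simp only [Nat.mul_zero, Nat.add_zero, Nat.zero_add]; try decide)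
      ·
        rcases cF with hF | hF | hF
        ·
          obtain ⟨e11, hG⟩ := cG'
          obtain ⟨e13, hH⟩ := cH'
          exact aux_leaf θ hpf h13 m hm ω hω3 cube 0 0 0 1 0 0 3 0 0 0 0 0 2 2 1 0 e11 e13 hA hB hE hF hG hH (by norm_num) (by try simp only [Nat.mul_zero, Nat.add_zero, Nat.zero_add]; try decide) (by try simp only [Nat.mul_zero, Nat.add_zero, Nat.zero_add]; try decide)
        ·
          obtain ⟨e11, hG⟩ := cG'
          obtain ⟨e13, hH⟩ := cH'
          exact aux_leaf θ hpf h13 m hm ω hω3 cube 1 0 0 1 0 0 0 1 1 0 0 0 2 2 1 1 e11 e13 hA hB hE hF hG hH (by norm_num) (by try simp only [Nat.mul_zero, Nat.add_zero, Nat.zero_add]; try decide) (by try simp only [Nat.mul_zero, Nat.add_zero, Nat.zero_add]; try decide)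
        ·
          obtain ⟨e11, hG⟩ := cG'
          obtain ⟨e13, hH⟩ := cH'
          exact aux_leaf θ hpf h13 m hm ω hω3 cube 0 3 0 0 0 0 2 0 0 1 0 0 2 2 1 2 e11 e13 hA hB hE hF hG hH (by norm_num) (by try simp only [Nat.mul_zero, Nat.add_zero, Nat.zero_add]; try decide) (by try simp only [Nat.mul_zero, Nat.add_zero, Nat.zero_add]; try decide)
      ·
        rcases cF with hF | hF | hF
        ·
          obtain ⟨e11, hG⟩ := cG'
          obtain ⟨e13, hH⟩ := cH'
          exact aux_leaf θ hpf h13 m hm ω hω3 cube 0 0 0 1 0 0 3 0 0 0 0 0 2 2 2 0 e11 e13 hA hB hE hF hG hH (by norm_num) (by try simp only [Nat.mul_zero, Nat.add_zero, Nat.zero_add]; try decide) (by try simp only [Nat.mul_zero, Nat.add_zero, Nat.zero_add]; try decide)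
        ·
          obtain ⟨e11, hG⟩ := cG'
          obtain ⟨e13, hH⟩ := cH'
          exact aux_leaf θ hpf h13 m hm ω hω3 cube 2 0 1 0 0 0 0 1 0 1 0 0 2 2 2 1 e11 e13 hA hB hE hF hG hH (by norm_num) (by try simp only [Nat.mul_zero, Nat.add_zero, Nat.zero_add]; try decide) (by try simp only [Nat.mul_zero, Nat.add_zero, Nat.zero_add]; try decide)
        ·
          obtain ⟨e11, hG⟩ := cG'
          obtain ⟨e13, hH⟩ := cH'
          exact aux_leaf θ hpf h13 m hm ω hω3 cube 0 3 0 0 0 0 2 0 0 1 0 0 2 2 2 2 e11 e13 hA hB hE hF hG hH (by norm_num) (by try simp only [Nat.mul_zero, Nat.add_zero, Nat.zero_add]; try decide) (by try simp only [Nat.mul_zero, Nat.add_zero, Nat.zero_add]; try decide)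
end
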